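/- arXiv:0804.2291 — 8 statements merged into one kernel-verified Lean document; each statement's English description precedes it below -/
import Mathlib

section
/- Let N ≥ 1 and let (Γ₁, Γ₂) be a pair of N×N complex matrices representing a true 2×N×N entangled state. Set n = r_max(Γ₁,Γ₂) and l = r_min(Γ₁,Γ₂), and suppose n < N. Then 2(N − n) ≤ l ≤ n. -/
open Matrix

/-- Maximum rank of the pencil `α • Γ₁ + β • Γ₂` over `(α, β) ≠ (0, 0)`. -/
noncomputable def rmax {N : ℕ} (Γ₁ Γ₂ : Matrix (Fin N) (Fin N) ℂ) : ℕ :=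
  sSup {r : ℕ | ∃ α β : ℂ, ¬(α = 0 ∧ β = 0) ∧ (α • Γ₁ + β • Γ₂).rank = r}

/-- Minimum rank of the pencil `α • Γ₁ + β • Γ₂` over `(α, β) ≠ (0, 0)`. -/
noncomputable def rmin {N : ℕ} (Γ₁ Γ₂ : Matrix (Fin N) (Fin N) ℂ) : ℕ :=
  sInf {r : ℕ | ∃ α β : ℂ, ¬(α = 0 ∧ β = 0) ∧ (α • Γ₁ + β • Γ₂).rank = r}

/-- A pair `(Γ₁, Γ₂)` of `N × N` complex matrices represents a true `2 × N × N`
entangled state. -/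
def TrueEntangled {N : ℕ} (Γ₁ Γ₂ : Matrix (Fin N) (Fin N) ℂ) : Prop :=
  LinearIndependent ℂ ![Γ₁, Γ₂] ∧
  (Matrix.fromRows Γ₁ Γ₂).rank = N ∧
  (Matrix.fromCols Γ₁ Γ₂).rank = N

/-!
Let `A = α Γ₁ + β Γ₂` attain `r_min` and let `B` be `Γ₂` (or `Γ₁` when `α = 0`), so that
`rank (A + t B) ≤ n` for every `t`. The polynomial pencil `A + t B` then has rank at most `n` over
`ℂ(t)`, and a degree-reduction argument produces `N - n` polynomial kernel vectors
`x₀ + t x₁ + t² x₂ + ⋯` whose constant terms are linearly independent. Comparing coefficients gives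
`A X₀ = 0`, `A X₁ + B X₀ = 0`, `A X₂ + B X₁ = 0`, and likewise `Y₀, Y₁, Y₂` for the transposed
pencil. As `A` and `B` have no common right or left kernel vector, `A X₁` and `Y₁ᵀ A` both have
rank `N - n`, while `Y₁ᵀ A X₁ = -Y₀ᵀ B X₁ = Y₀ᵀ A X₂ = 0`; Frobenius' rank inequality then gives
`2 (N - n) ≤ rank A`.
-/

open Matrix Polynomial Module Submodule

section LinearAlgebra

variable {K : Type*} [Field K] {l m n o : Type*} [Fintype n]

theorem exists_fin_linearIndependent_comp {ι V : Type*} [Finite ι] [AddCommGroup V]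
    [Module K V] (v : ι → V) {k : ℕ} (hk : k ≤ finrank K (span K (Set.range v))) :
    ∃ g : Fin k → ι, LinearIndependent K (v ∘ g) := by
  obtain ⟨κ, a, ha, hspan, hli⟩ := exists_linearIndependent' K v
  have : Finite κ := Finite.of_injective a ha
  cases nonempty_fintype κ
  rw [← hspan, finrank_span_eq_card hli] at hk
  let e : Fin k ↪ κ := (Fin.castLEEmb hk).trans (Fintype.equivFin κ).symm.toEmbedding
  exact ⟨a ∘ e, hli.comp e e.injective⟩

theorem LinearIndependent.update_of_smul_eq_sum {V ι : Type*} [AddCommGroup V] [Module K V]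
    [Fintype ι] [DecidableEq ι] {v : ι → V} (hv : LinearIndependent K v) {c : ι → K} {j : ι}
    (hj : c j ≠ 0) {a : K} {w : V} (hw : a • w = ∑ k, c k • v k) :
    LinearIndependent K (Function.update v j w) := by
  set W := Function.update v j w
  have hvW : ∀ k, k ≠ j → v k = W k := fun k hk => (Function.update_of_ne hk w v).symm
  have hvj : c j • v j ∈ span K (Set.range W) := by
    have hsplit := Finset.add_sum_erase Finset.univ (fun k => c k • v k) (Finset.mem_univ j)
    rw [← hw] at hsplit
    rw [eq_sub_of_add_eq hsplit]
    refine sub_mem (smul_mem _ _ (subset_span ⟨j, by simp [W]⟩)) (sum_mem fun k hk => ?_)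
    rw [hvW k (Finset.ne_of_mem_erase hk)]
    exact smul_mem _ _ (subset_span ⟨k, rfl⟩)
  have hspan : span K (Set.range v) ≤ span K (Set.range W) := by
    rw [span_le]
    rintro _ ⟨k, rfl⟩
    rcases eq_or_ne k j with rfl | hk
    · exact (smul_mem_iff _ hj).mp hvj
    · exact hvW k hk ▸ subset_span ⟨k, rfl⟩
  have := FiniteDimensional.span_of_finite K (Set.finite_range W)
  rw [linearIndependent_iff_card_eq_finrank_span]
  refine le_antisymm ?_ (finrank_range_le_card W)
  calc Fintype.card ι = (Set.range v).finrank K :=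
        linearIndependent_iff_card_eq_finrank_span.mp hv
    _ ≤ (Set.range W).finrank K := Submodule.finrank_mono hspan

namespace Matrix

theorem exists_linearIndependent_row_submatrix [Fintype m] (M : Matrix m n K) {k : ℕ}
    (hk : k ≤ M.rank) :
    ∃ f : Fin k → m, LinearIndependent K (M.submatrix f id).row :=
  exists_fin_linearIndependent_comp M.row (hk.trans_eq M.rank_eq_finrank_span_row)

theorem exists_submatrix_det_ne_zero [Fintype m] (M : Matrix m n K) {k : ℕ} (hk : k ≤ M.rank) :
    ∃ (f : Fin k → m) (g : Fin k → n), (M.submatrix f g).det ≠ 0 := by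
  obtain ⟨f, hf⟩ := M.exists_linearIndependent_row_submatrix hk
  have hrank : (M.submatrix f id)ᵀ.rank = k := by
    rw [rank_transpose, hf.rank_matrix, Fintype.card_fin]
  obtain ⟨g, hg⟩ := (M.submatrix f id)ᵀ.exists_linearIndependent_row_submatrix hrank.ge
  refine ⟨f, g, ?_⟩
  rw [← det_transpose]
  exact ((isUnit_iff_isUnit_det _).mp (linearIndependent_rows_iff_isUnit.mp hg)).ne_zero

theorem le_rank_of_submatrix_det_ne_zero (M : Matrix m n K) {k : ℕ} {f : Fin k → m}
    {g : Fin k → n} (h : (M.submatrix f g).det ≠ 0) : k ≤ M.rank := by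
  simpa [rank_of_det_ne_zero h] using rank_submatrix_le M f g

theorem ker_mulVecLin_eq_bot_of_rank_eq {M : Matrix m n K} (h : M.rank = Fintype.card n) :
    LinearMap.ker M.mulVecLin = ⊥ := by
  have := LinearMap.finrank_range_add_finrank_ker M.mulVecLin
  rw [← rank, h, finrank_fintype_fun_eq_card] at this
  exact finrank_eq_zero.mp (by omega)

theorem eq_zero_of_rank_fromRows_eq {A B : Matrix m n K}
    (h : (fromRows A B).rank = Fintype.card n) {x : n → K} (hA : A *ᵥ x = 0)
    (hB : B *ᵥ x = 0) : x = 0 := by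
  have hx : x ∈ LinearMap.ker (fromRows A B).mulVecLin := by
    rw [LinearMap.mem_ker, mulVecLin_apply, fromRows_mulVec, hA, hB, Sum.elim_zero_zero]
  rwa [ker_mulVecLin_eq_bot_of_rank_eq h, mem_bot] at hx

theorem rank_le_rank_of_ker_mulVecLin_le {M : Matrix m n K} {N : Matrix l n K}
    (h : LinearMap.ker M.mulVecLin ≤ LinearMap.ker N.mulVecLin) : N.rank ≤ M.rank := by
  have hM := LinearMap.finrank_range_add_finrank_ker M.mulVecLin
  have hN := LinearMap.finrank_range_add_finrank_ker N.mulVecLin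
  have := Submodule.finrank_mono h
  rw [rank, rank]
  omega

theorem rank_le_rank_mul_of_mul_add_mul_eq_zero [Fintype o] {A B : Matrix m n K}
    {X₀ X₁ : Matrix n o K} (hker : ∀ x, A *ᵥ x = 0 → B *ᵥ x = 0 → x = 0)
    (h₀ : A * X₀ = 0) (h₁ : A * X₁ + B * X₀ = 0) :
    X₀.rank ≤ (A * X₁).rank := by
  refine rank_le_rank_of_ker_mulVecLin_le fun g hg => ?_
  rw [LinearMap.mem_ker, mulVecLin_apply] at hg ⊢
  refine hker _ ?_ ?_
  · rw [mulVec_mulVec, h₀, zero_mulVec]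
  · rw [mulVec_mulVec, eq_neg_of_add_eq_zero_right h₁, neg_mulVec, hg, neg_zero]

theorem rank_mul_add_rank_mul_le_of_mul_mul_eq_zero [Fintype m] [Fintype o]
    {Y : Matrix l m K} {A : Matrix m n K} {X : Matrix n o K} (h : Y * A * X = 0) :
    (Y * A).rank + (A * X).rank ≤ A.rank := by
  set R := LinearMap.range A.mulVecLin
  have hYA : (Y * A).rank = finrank K (R.map Y.mulVecLin) := by
    rw [rank, mulVecLin_mul, LinearMap.range_comp]
  have hAX_le : LinearMap.range (A * X).mulVecLin ≤ R := by
    rw [mulVecLin_mul]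
    exact LinearMap.range_comp_le_range _ _
  have hAX_ker : LinearMap.range (A * X).mulVecLin ≤ LinearMap.ker Y.mulVecLin := by
    rw [LinearMap.range_le_ker_iff, ← mulVecLin_mul, ← Matrix.mul_assoc, h, mulVecLin_zero]
  have hAX : (A * X).rank ≤ finrank K (LinearMap.ker (Y.mulVecLin.domRestrict R)) := by
    rw [LinearMap.ker_domRestrict, rank, ← (comapSubtypeEquivOfLe hAX_le).finrank_eq]
    exact Submodule.finrank_mono (comap_mono hAX_ker)
  have := LinearMap.finrank_range_add_finrank_ker (Y.mulVecLin.domRestrict R)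
  rw [LinearMap.range_domRestrict, ← hYA] at this
  have hA : A.rank = finrank K R := rfl
  omega

end Matrix

end LinearAlgebra

section PolynomialKernel

variable {K : Type*} [Field K] {m n : Type*}

def vecNatDegree [Fintype n] {R : Type*} [Semiring R] (v : n → R[X]) : ℕ :=
  Finset.univ.sup fun j => (v j).natDegree

theorem vecNatDegree_sum_smul_le [Fintype n] {ι : Type*} [Fintype ι] (c : ι → K)
    (v : ι → n → K[X]) {D : ℕ} (hD : ∀ k, c k ≠ 0 → vecNatDegree (v k) ≤ D) :
    vecNatDegree (∑ k, c k • v k) ≤ D := by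
  refine Finset.sup_le fun j _ => ?_
  rw [Finset.sum_apply]
  refine natDegree_sum_le_of_forall_le _ _ fun k _ => ?_
  rcases eq_or_ne (c k) 0 with hc | hc
  · simp [hc]
  · exact (natDegree_smul_le _ _).trans
      ((Finset.le_sup (f := fun j => (v k j).natDegree) (Finset.mem_univ j)).trans (hD k hc))

theorem vecNatDegree_divX_lt [Fintype n] {u : n → K[X]} (hu : u ≠ 0)
    (h0 : ∀ j, (u j).coeff 0 = 0) :
    vecNatDegree (fun j => (u j).divX) < vecNatDegree u := by
  obtain ⟨j₀, hj₀⟩ := Function.ne_iff.mp hu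
  have hpos : 0 < vecNatDegree u := by
    refine lt_of_lt_of_le ?_
      (Finset.le_sup (f := fun j => (u j).natDegree) (Finset.mem_univ j₀))
    refine Nat.pos_of_ne_zero fun hdeg => hj₀ ?_
    rw [eq_C_of_natDegree_eq_zero hdeg, h0, map_zero, Pi.zero_apply]
  refine lt_of_le_of_lt (Finset.sup_le fun j _ => ?_) (Nat.sub_lt hpos one_pos)
  rw [natDegree_divX_eq_natDegree_tsub_one]
  exact Nat.sub_le_sub_right
    (Finset.le_sup (f := fun j => (u j).natDegree) (Finset.mem_univ j)) 1

theorem X_smul_divX_eq_self {R : Type*} [Semiring R] {u : n → R[X]}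
    (h0 : ∀ i, (u i).coeff 0 = 0) : (X : R[X]) • (fun i => (u i).divX) = u := by
  funext i
  simpa [h0 i] using X_mul_divX_add (u i)

theorem Matrix.mulVec_divX_eq_zero [Fintype n] (P : Matrix m n K[X]) {u : n → K[X]}
    (hPu : P *ᵥ u = 0) (h0 : ∀ i, (u i).coeff 0 = 0) : P *ᵥ (fun i => (u i).divX) = 0 := by
  have : (X : K[X]) • (P *ᵥ fun i => (u i).divX) = 0 := by
    rw [← mulVec_smul, X_smul_divX_eq_self h0, hPu]
  exact (smul_eq_zero.mp this).resolve_left X_ne_zero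

/- If `∑ cₖ vₖ(0) = 0`, then `(∑ cₖ vₖ) / t` is again a kernel vector, and it replaces a `vⱼ`
of maximal degree among those with `cⱼ ≠ 0`. -/
theorem Matrix.exists_ker_family_vecNatDegree_lt [Fintype n] (P : Matrix m n K[X]) {ι : Type*}
    [Fintype ι] [DecidableEq ι] (v : ι → n → K[X]) (hker : ∀ k, P *ᵥ v k = 0)
    (hind : LinearIndependent (RatFunc K) fun k => algebraMap K[X] (RatFunc K) ∘ v k)
    (hdep : ¬LinearIndependent K fun k j => (v k j).coeff 0) :
    ∃ w : ι → n → K[X], (∀ k, P *ᵥ w k = 0) ∧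
      (LinearIndependent (RatFunc K) fun k => algebraMap K[X] (RatFunc K) ∘ w k) ∧
      ∑ k, vecNatDegree (w k) < ∑ k, vecNatDegree (v k) := by
  classical
  obtain ⟨c, hc, j₀, hj₀⟩ := Fintype.not_linearIndependent_iff.mp hdep
  obtain ⟨j, hj, hjmax⟩ := (Finset.univ.filter (c · ≠ 0)).exists_max_image
    (fun k => vecNatDegree (v k)) ⟨j₀, by simpa using hj₀⟩
  rw [Finset.mem_filter] at hj
  set u : n → K[X] := ∑ k, c k • v k
  set y : n → K[X] := fun i => (u i).divX
  have hu0 : ∀ i, (u i).coeff 0 = 0 := by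
    intro i
    simpa [u, Finset.sum_apply, finsetSum_coeff] using congr_fun hc i
  have hφu : algebraMap K[X] (RatFunc K) ∘ u =
      ∑ k, algebraMap K (RatFunc K) (c k) • (algebraMap K[X] (RatFunc K) ∘ v k) := by
    funext i
    simp [u, Finset.sum_apply, Algebra.smul_def]
  have hu : u ≠ 0 := by
    intro h
    rw [h] at hφu
    have := Fintype.linearIndependent_iff.mp hind _ (by simpa using hφu.symm) j
    exact hj.2 (by simpa using this)
  have hyker : P *ᵥ y = 0 :=
    P.mulVec_divX_eq_zero (by simp [u, mulVec_sum, mulVec_smul, hker]) hu0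
  have hdeg : vecNatDegree y < vecNatDegree (v j) :=
    (vecNatDegree_divX_lt hu hu0).trans_le
      (vecNatDegree_sum_smul_le c v fun k hk => hjmax k (by simpa using hk))
  refine ⟨Function.update v j y, fun k => ?_, ?_, ?_⟩
  · rcases eq_or_ne k j with rfl | hk
    · simpa using hyker
    · simpa [hk] using hker k
  · have hXy' : algebraMap K[X] (RatFunc K) X • (algebraMap K[X] (RatFunc K) ∘ y) =
        ∑ k, algebraMap K (RatFunc K) (c k) • (algebraMap K[X] (RatFunc K) ∘ v k) := by
      rw [← hφu, ← X_smul_divX_eq_self hu0]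
      funext i
      simp [y]
    convert hind.update_of_smul_eq_sum (by simpa using hj.2) hXy' using 1
    · funext k
      rcases eq_or_ne k j with rfl | hk <;> simp [*]
    · rfl
  · refine Finset.sum_lt_sum (fun k _ => ?_) ⟨j, Finset.mem_univ j, by simpa using hdeg⟩
    rcases eq_or_ne k j with rfl | hk
    · simpa using hdeg.le
    · simp [hk]

theorem Matrix.exists_ker_family_coeff_zero_linearIndependent [Fintype n] (P : Matrix m n K[X])
    {ι : Type*} [Fintype ι] [DecidableEq ι] (v : ι → n → K[X]) (hker : ∀ k, P *ᵥ v k = 0)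
    (hind : LinearIndependent (RatFunc K) fun k => algebraMap K[X] (RatFunc K) ∘ v k) :
    ∃ w : ι → n → K[X], (∀ k, P *ᵥ w k = 0) ∧
      LinearIndependent K fun k j => (w k j).coeff 0 := by
  obtain ⟨w, ⟨hwker, hwind⟩, hmin⟩ :=
    (measure fun w : ι → n → K[X] => ∑ k, vecNatDegree (w k)).wf.has_min
      {w | (∀ k, P *ᵥ w k = 0) ∧
        LinearIndependent (RatFunc K) fun k => algebraMap K[X] (RatFunc K) ∘ w k}
      ⟨v, hker, hind⟩
  refine ⟨w, hwker, by_contra fun hdep => ?_⟩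
  obtain ⟨w', hw'ker, hw'ind, hlt⟩ := P.exists_ker_family_vecNatDegree_lt w hwker hwind hdep
  exact hmin w' ⟨hw'ker, hw'ind⟩ hlt

theorem Matrix.exists_ker_family_linearIndependent_ratFunc [Fintype n] (P : Matrix m n K[X])
    {p : ℕ} (hp : p ≤ finrank (RatFunc K)
      (LinearMap.ker (P.map (algebraMap K[X] (RatFunc K))).mulVecLin)) :
    ∃ v : Fin p → n → K[X], (∀ k, P *ᵥ v k = 0) ∧
      LinearIndependent (RatFunc K) fun k => algebraMap K[X] (RatFunc K) ∘ v k := by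
  obtain ⟨w, hw⟩ := exists_linearIndependent_of_le_finrank hp
  obtain ⟨b, hb⟩ := IsLocalization.exist_integer_multiples_of_finite (nonZeroDivisors K[X])
    fun kj : Fin p × n => (w kj.1 : n → RatFunc K) kj.2
  choose v hv using hb
  have hb0 : algebraMap K[X] (RatFunc K) b ≠ 0 :=
    IsLocalization.to_map_ne_zero_of_mem_nonZeroDivisors _ le_rfl b.2
  have hφv : ∀ k, algebraMap K[X] (RatFunc K) ∘ (fun j => v (k, j)) =
      algebraMap K[X] (RatFunc K) b • (w k : n → RatFunc K) := by
    intro k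
    funext j
    simp [hv (k, j), Algebra.smul_def]
  refine ⟨fun k j => v (k, j), fun k => ?_, ?_⟩
  · funext i
    apply IsFractionRing.injective K[X] (RatFunc K)
    rw [RingHom.map_mulVec, hφv, mulVec_smul]
    have hwk : (P.map (algebraMap K[X] (RatFunc K))) *ᵥ (w k : n → RatFunc K) = 0 := (w k).2
    simp [hwk]
  · simp_rw [hφv]
    exact (hw.map' (LinearMap.ker _).subtype (ker_subtype _)).units_smul
      fun _ => Units.mk0 _ hb0

end PolynomialKernel

namespace Matrix

variable {K : Type*} [Field K] {m n : Type*}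

theorem exists_rank_map_ratFunc_le_rank_map_eval [Infinite K] [Fintype m] [Fintype n]
    (P : Matrix m n K[X]) :
    ∃ t : K, (P.map (algebraMap K[X] (RatFunc K))).rank ≤ (P.map (eval t)).rank := by
  obtain ⟨f, g, hdet⟩ :=
    (P.map (algebraMap K[X] (RatFunc K))).exists_submatrix_det_ne_zero le_rfl
  rw [submatrix_map, ← RingHom.mapMatrix_apply, ← RingHom.map_det] at hdet
  obtain ⟨t, ht⟩ : ∃ t, ((P.submatrix f g).det).eval t ≠ 0 := by
    by_contra! h
    exact hdet (by rw [zero_of_eval_zero _ h, map_zero])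
  refine ⟨t, le_rank_of_submatrix_det_ne_zero _ (f := f) (g := g) ?_⟩
  rwa [submatrix_map, ← coe_evalRingHom, ← RingHom.mapMatrix_apply, ← RingHom.map_det]

noncomputable def pencil (A B : Matrix m n K) : Matrix m n K[X] :=
  A.map C + (X : K[X]) • B.map C

theorem pencil_map_eval (A B : Matrix m n K) (t : K) :
    (pencil A B).map (eval t) = A + t • B := by
  ext i j
  simp only [pencil, map_apply, add_apply, smul_apply, smul_eq_mul, eval_add, eval_mul, eval_C,
    eval_X]

theorem pencil_mul_map_coeff_zero [Fintype n] {o : Type*} (A B : Matrix m n K)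
    (V : Matrix n o K[X]) :
    (pencil A B * V).map (coeff · 0) = A * V.map (coeff · 0) := by
  ext i k
  simp [pencil, add_mul, mul_apply, finsetSum_coeff, mul_assoc]

theorem pencil_mul_map_coeff_succ [Fintype n] {o : Type*} (A B : Matrix m n K)
    (V : Matrix n o K[X]) (d : ℕ) :
    (pencil A B * V).map (coeff · (d + 1)) =
      A * V.map (coeff · (d + 1)) + B * V.map (coeff · d) := by
  ext i k
  simp [pencil, add_mul, mul_apply, finsetSum_coeff, mul_assoc, Finset.sum_add_distrib]

variable [Fintype m] [Fintype n]

theorem exists_pencil_ker_chain [Infinite K] (A B : Matrix m n K) {r : ℕ}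
    (hr : ∀ t : K, (A + t • B).rank ≤ r) :
    ∃ X₀ X₁ X₂ : Matrix n (Fin (Fintype.card n - r)) K, X₀.rank = Fintype.card n - r ∧
      A * X₀ = 0 ∧ A * X₁ + B * X₀ = 0 ∧ A * X₂ + B * X₁ = 0 := by
  obtain ⟨t, ht⟩ := (pencil A B).exists_rank_map_ratFunc_le_rank_map_eval
  rw [pencil_map_eval] at ht
  set Pφ := (pencil A B).map (algebraMap K[X] (RatFunc K))
  have hker : Fintype.card n - r ≤ finrank (RatFunc K) (LinearMap.ker Pφ.mulVecLin) := by
    have := LinearMap.finrank_range_add_finrank_ker Pφ.mulVecLin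
    have hPφ : Pφ.rank = finrank (RatFunc K) (LinearMap.range Pφ.mulVecLin) := rfl
    rw [finrank_fintype_fun_eq_card] at this
    have := hr t
    omega
  obtain ⟨v, hvker, hvind⟩ := (pencil A B).exists_ker_family_linearIndependent_ratFunc hker
  obtain ⟨w, hwker, hwind⟩ :=
    (pencil A B).exists_ker_family_coeff_zero_linearIndependent v hvker hvind
  set V : Matrix n (Fin _) K[X] := of fun i k => w k i
  have hPV : pencil A B * V = 0 := by
    refine Matrix.ext fun i k => ?_
    simpa [V, mulVec, dotProduct, mul_apply] using congr_fun (hwker k) i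
  refine ⟨V.map (coeff · 0), V.map (coeff · 1), V.map (coeff · 2), ?_, ?_, ?_, ?_⟩
  · rw [← rank_transpose]
    exact hwind.rank_matrix.trans (Fintype.card_fin _)
  · rw [← pencil_mul_map_coeff_zero, hPV]
    exact Matrix.map_zero _ (coeff_zero 0)
  · rw [← pencil_mul_map_coeff_succ, hPV]
    exact Matrix.map_zero _ (coeff_zero 1)
  · rw [← pencil_mul_map_coeff_succ, hPV]
    exact Matrix.map_zero _ (coeff_zero 2)

theorem card_sub_add_card_sub_le_rank [Infinite K] {A B : Matrix m n K} {r : ℕ}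
    (hker : ∀ x, A *ᵥ x = 0 → B *ᵥ x = 0 → x = 0)
    (hkerT : ∀ y, Aᵀ *ᵥ y = 0 → Bᵀ *ᵥ y = 0 → y = 0)
    (hr : ∀ t : K, (A + t • B).rank ≤ r) :
    (Fintype.card n - r) + (Fintype.card m - r) ≤ A.rank := by
  obtain ⟨X₀, X₁, X₂, hX, hX₀, hX₁, hX₂⟩ := exists_pencil_ker_chain A B hr
  obtain ⟨Y₀, Y₁, -, hY, hY₀, hY₁, -⟩ := exists_pencil_ker_chain Aᵀ Bᵀ fun t => by
    simpa [← transpose_smul, ← transpose_add, rank_transpose] using hr t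
  have hY₁A : Y₁ᵀ * A = -(Y₀ᵀ * B) := by
    simpa [transpose_mul] using congr_arg transpose (eq_neg_of_add_eq_zero_left hY₁)
  have hY₀A : Y₀ᵀ * A = 0 := by
    simpa [transpose_mul] using congr_arg transpose hY₀
  have hYAX : Y₁ᵀ * A * X₁ = 0 := by
    calc Y₁ᵀ * A * X₁ = -(Y₀ᵀ * (B * X₁)) := by rw [hY₁A, Matrix.neg_mul, Matrix.mul_assoc]
      _ = Y₀ᵀ * A * X₂ := by
        rw [eq_neg_of_add_eq_zero_right hX₂, Matrix.mul_neg, neg_neg, Matrix.mul_assoc]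
      _ = 0 := by rw [hY₀A, Matrix.zero_mul]
  have hXrank := rank_le_rank_mul_of_mul_add_mul_eq_zero hker hX₀ hX₁
  have hYrank := rank_le_rank_mul_of_mul_add_mul_eq_zero hkerT hY₀ hY₁
  have hsum := rank_mul_add_rank_mul_le_of_mul_mul_eq_zero hYAX
  rw [← rank_transpose (Y₁ᵀ * A), transpose_mul, transpose_transpose] at hsum
  omega

theorem card_sub_add_card_sub_le_rank_of_pencil [Infinite K] {Γ₁ Γ₂ : Matrix m n K}
    {r : ℕ} (hr : ∀ a b : K, ¬(a = 0 ∧ b = 0) → (a • Γ₁ + b • Γ₂).rank ≤ r)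
    (hker : ∀ x, Γ₁ *ᵥ x = 0 → Γ₂ *ᵥ x = 0 → x = 0)
    (hkerT : ∀ y, Γ₁ᵀ *ᵥ y = 0 → Γ₂ᵀ *ᵥ y = 0 → y = 0) {α β : K} (hαβ : ¬(α = 0 ∧ β = 0)) :
    (Fintype.card n - r) + (Fintype.card m - r) ≤ (α • Γ₁ + β • Γ₂).rank := by
  wlog hα : α ≠ 0 generalizing Γ₁ Γ₂ α β
  · rw [add_comm (α • Γ₁)]
    refine this (fun a b hab => ?_) (fun x h₂ h₁ => hker x h₁ h₂)
      (fun y h₂ h₁ => hkerT y h₁ h₂) (by tauto) (by tauto)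
    rw [add_comm]
    exact hr b a (by tauto)
  refine card_sub_add_card_sub_le_rank (B := Γ₂) (fun x hA hB => hker x ?_ hB)
    (fun y hA hB => hkerT y ?_ hB) fun t => ?_
  · rw [add_mulVec, smul_mulVec, smul_mulVec, hB, smul_zero, add_zero] at hA
    exact (smul_eq_zero.mp hA).resolve_left hα
  · rw [transpose_add, transpose_smul, transpose_smul, add_mulVec, smul_mulVec, smul_mulVec, hB,
      smul_zero, add_zero] at hA
    exact (smul_eq_zero.mp hA).resolve_left hα
  · rw [add_assoc, ← add_smul]
    exact hr α (β + t) fun h => hα h.1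

end Matrix

theorem rank_constraint_on_true_entangled_general {N : ℕ}
    (Γ₁ Γ₂ : Matrix (Fin N) (Fin N) ℂ) (h : TrueEntangled Γ₁ Γ₂) :
    2 * (N - rmax Γ₁ Γ₂) ≤ rmin Γ₁ Γ₂ ∧ rmin Γ₁ Γ₂ ≤ rmax Γ₁ Γ₂ := by
  obtain ⟨-, hrows, hcols⟩ := h
  set S := {r : ℕ | ∃ α β : ℂ, ¬(α = 0 ∧ β = 0) ∧ (α • Γ₁ + β • Γ₂).rank = r}
  have hne : S.Nonempty := ⟨_, 1, 0, by simp, rfl⟩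
  have hbdd : BddAbove S := ⟨N, by
    rintro _ ⟨α, β, -, rfl⟩
    simpa using (α • Γ₁ + β • Γ₂).rank_le_card_width⟩
  obtain ⟨α, β, hαβ, hmin⟩ : rmin Γ₁ Γ₂ ∈ S := Nat.sInf_mem hne
  refine ⟨?_, Nat.sInf_le (Nat.sSup_mem hne hbdd)⟩
  have hcolsT : (fromRows Γ₁ᵀ Γ₂ᵀ).rank = Fintype.card (Fin N) := by
    rw [← transpose_fromCols, rank_transpose, hcols, Fintype.card_fin]
  have := card_sub_add_card_sub_le_rank_of_pencil (r := rmax Γ₁ Γ₂)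
    (fun a b hab => le_csSup hbdd ⟨a, b, hab, rfl⟩)
    (fun x => eq_zero_of_rank_fromRows_eq (hrows.trans (Fintype.card_fin N).symm))
    (fun y => eq_zero_of_rank_fromRows_eq hcolsT) hαβ
  rw [hmin, Fintype.card_fin] at this
  omega

theorem rank_constraint_on_true_entangled {N : ℕ} (hN : 1 ≤ N)
    (Γ₁ Γ₂ : Matrix (Fin N) (Fin N) ℂ) (h : TrueEntangled Γ₁ Γ₂)
    (hn : rmax Γ₁ Γ₂ < N) :
    2 * (N - rmax Γ₁ Γ₂) ≤ rmin Γ₁ Γ₂ ∧ rmin Γ₁ Γ₂ ≤ rmax Γ₁ Γ₂ :=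
  rank_constraint_on_true_entangled_general Γ₁ Γ₂ h
end

section
/- Let N ≥ 1 and let (Γ₁, Γ₂) be a pair of N×N complex matrices representing a true 2×N×N entangled state with n = r_max(Γ₁,Γ₂) < N. Then 3n ≥ 2N (i.e. n ≥ 2N/3). -/
/-!
Let `A = α Γ₁ + β Γ₂` have the maximal rank `n` in the pencil and let `B` be the other
generator, so that `rank (A + t B) ≤ n` for every `t`. Linear independence of vectors `vᵢ` persists
for `vᵢ + t wᵢ` for all but finitely many `t`; hence a vector lying in `range (A + t B)` for all
`t ≠ 0` already lies in `range A`. Applied to `(A + t B)(t⁻¹ y - t⁻² x) = B y`, where `A x = 0`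
and `A y = B x`, this shows that `B` maps `W = A⁻¹ (B (ker A))` into `range A`.

Put `k = N - n`. True entanglement makes `B` injective on `ker A`, so `dim W = 2k`, and makes
`range A + range B` the whole space, so `B` induces a surjection of `ℂᴺ / W` onto `ℂᴺ / range A`.
Hence `k ≤ N - 2k`, that is `2N ≤ 3n`.
-/

open Matrix

open Polynomial Module LinearMap Submodule

theorem Matrix.eval_charpolyRev_eq_det {K n : Type*} [CommRing K] [Fintype n] [DecidableEq n]
    (M : Matrix n n K) (t : K) : M.charpolyRev.eval t = (1 - t • M).det := by
  rw [charpolyRev, ← coe_evalRingHom, RingHom.map_det]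
  congr 1
  ext i j
  simp only [RingHom.mapMatrix_apply, coe_evalRingHom, map_apply, sub_apply, one_apply, smul_apply,
    smul_eq_mul, apply_ite, eval_sub, eval_one, eval_zero, eval_mul, eval_C, eval_X]

theorem Matrix.eventually_linearIndependent_row_add_smul {K ι d : Type*} [Field K] [Fintype ι]
    [Fintype d] {M₀ : Matrix ι d K} (M₁ : Matrix ι d K) (hM₀ : LinearIndependent K M₀.row) :
    ∀ᶠ t : K in Filter.cofinite, LinearIndependent K (M₀ + t • M₁).row := by
  classical
  have hsurj : Function.Surjective M₀.mulVec := by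
    rw [← Matrix.coe_mulVecLin, ← LinearMap.range_eq_top]
    apply Submodule.eq_top_of_finrank_eq
    rw [finrank_fintype_fun_eq_card]
    exact hM₀.rank_matrix
  obtain ⟨Q, hQ⟩ := mulVec_surjective_iff_exists_right_inverse.mp hsurj
  -- `det ((M₀ + t • M₁) * Q) = det (1 + t • (M₁ * Q))` is a polynomial in `t` equal to `1` at `0`.
  set p := (-(M₁ * Q)).charpolyRev
  have hp : p ≠ 0 := ne_of_apply_ne (eval 0) (by simp [p])
  refine Filter.eventually_cofinite.mpr ((p.finite_setOfPred_isRoot hp).subset fun t ht => ?_)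
  by_contra hroot
  apply ht
  have hunit : IsUnit ((M₀ + t • M₁) * Q) := by
    rw [Matrix.isUnit_iff_isUnit_det, isUnit_iff_ne_zero, Matrix.add_mul, hQ, Matrix.smul_mul,
      ← sub_neg_eq_add, ← smul_neg, ← eval_charpolyRev_eq_det]
    exact hroot
  rw [← Matrix.vecMul_injective_iff]
  intro x y hxy
  apply Matrix.vecMul_injective_iff_isUnit.mpr hunit
  simp only [← Matrix.vecMul_vecMul, hxy]

section

variable {K V W : Type*} [Field K] [AddCommGroup V] [Module K V] [AddCommGroup W] [Module K W]

theorem LinearIndependent.eventually_add_smul [FiniteDimensional K W] {ι : Type*} [Fintype ι]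
    {v : ι → W} (w : ι → W) (hv : LinearIndependent K v) :
    ∀ᶠ t : K in Filter.cofinite, LinearIndependent K fun i => v i + t • w i := by
  let e := (Module.finBasis K W).equivFun
  filter_upwards [Matrix.eventually_linearIndependent_row_add_smul (M₀ := .of fun i => e (v i))
    (.of fun i => e (w i)) (hv.map' e.toLinearMap e.ker)] with t ht
  have hrow : (fun i => v i + t • w i) = e.symm ∘ (Matrix.of fun i => e (v i) + t • e (w i)) := by
    funext i
    simp only [← map_smul, ← map_add]
    exact (e.symm_apply_apply _).symm
  rw [hrow]
  exact ht.map' e.symm.toLinearMap e.symm.ker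

namespace LinearMap

theorem mem_range_of_forall_mem_range_add_smul [Infinite K] [FiniteDimensional K W]
    {f g : V →ₗ[K] W} (hmax : ∀ t : K, finrank K (range (f + t • g)) ≤ finrank K (range f))
    {w : W} (hw : ∀ t : K, t ≠ 0 → w ∈ range (f + t • g)) : w ∈ range f := by
  -- Otherwise `w, f (u₁), …, f (uₙ)` with `f (uⱼ)` a basis of `range f` are independent, and so
  -- are `w, (f + t • g) (u₁), …` for some `t ≠ 0`: then `range (f + t • g)` is too large.
  by_contra hwf
  let b := Module.finBasis K (range f)
  choose u hu using fun j => mem_range.mp (b j).2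
  let c₀ : Fin (finrank K (range f) + 1) → W := Fin.cons w fun j => f (u j)
  let c₁ : Fin (finrank K (range f) + 1) → W := Fin.cons 0 fun j => g (u j)
  have hind : LinearIndependent K c₀ := by
    refine linearIndependent_finCons.mpr ⟨?_, fun hspan => hwf ?_⟩
    · simp only [hu]
      exact b.linearIndependent.map' (range f).subtype (range f).ker_subtype
    · refine span_le.mpr ?_ hspan
      rintro _ ⟨j, rfl⟩
      exact mem_range_self f (u j)
  obtain ⟨t, hindt, ht⟩ :=
    ((hind.eventually_add_smul c₁).and (Filter.eventually_cofinite_ne 0)).exists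
  have hspan : span K (Set.range fun j => c₀ j + t • c₁ j) ≤ range (f + t • g) := by
    refine span_le.mpr ?_
    rintro _ ⟨j, rfl⟩
    refine Fin.cases ?_ (fun j => ?_) j
    · simpa [c₀, c₁] using hw t ht
    · simp [c₀, c₁]
  have := (finrank_span_eq_card hindt).symm.trans_le ((finrank_mono hspan).trans (hmax t))
  simp at this

theorem comap_map_ker_le_comap_range [Infinite K] [FiniteDimensional K W]
    {f g : V →ₗ[K] W} (hmax : ∀ t : K, finrank K (range (f + t • g)) ≤ finrank K (range f)) :
    ((ker f).map g).comap f ≤ (range f).comap g := by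
  rintro y ⟨x, hx, hxy⟩
  refine mem_range_of_forall_mem_range_add_smul hmax fun t ht => ⟨t⁻¹ • y - (t⁻¹ * t⁻¹) • x, ?_⟩
  have hx : f x = 0 := hx
  simp only [add_apply, smul_apply, map_sub, map_smul, hx, ← hxy]
  match_scalars <;> simp [ht]

theorem finrank_map_add_finrank_inf_ker [FiniteDimensional K V] (f : V →ₗ[K] W)
    (p : Submodule K V) : finrank K (p.map f) + finrank K ↥(p ⊓ ker f) = finrank K p := by
  have := finrank_range_add_finrank_ker (f.domRestrict p)
  rwa [range_domRestrict, ker_domRestrict, ← finrank_map_subtype_eq, map_comap_subtype] at this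

theorem finrank_add_finrank_le_three_mul_of_comap_map_ker_le [FiniteDimensional K V]
    [FiniteDimensional K W] {f g : V →ₗ[K] W} (hfg : ((ker f).map g).comap f ≤ (range f).comap g)
    (hker : ker f ⊓ ker g = ⊥) (hrange : range f ⊔ range g = ⊤) :
    finrank K V + finrank K W ≤ 3 * finrank K (range f) := by
  set S := (ker f).map g
  have hkerS : ker f ≤ S.comap f := ker_le_comap f
  have hSk : finrank K S = finrank K (ker f) := by
    have := finrank_map_add_finrank_inf_ker g (ker f)
    rwa [hker, finrank_bot, add_zero] at this
  have hSrange : S ≤ range f := map_le_iff_le_comap.mpr (hkerS.trans hfg)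
  have hcomap : finrank K (S.comap f) = finrank K S + finrank K (ker f) := by
    have := finrank_map_add_finrank_inf_ker f (S.comap f)
    rwa [map_comap_eq, inf_of_le_right hSrange, inf_of_le_right hkerS, eq_comm] at this
  have hq : finrank K (W ⧸ range f) + finrank K ((range f).comap g) = finrank K V := by
    have := finrank_range_add_finrank_ker ((range f).mkQ ∘ₗ g)
    rwa [range_comp, (map_mkQ_eq_top _ _).mpr hrange, ker_comp, ker_mkQ, finrank_top] at this
  have hle := finrank_mono hfg
  have hquot := (range f).finrank_quotient_add_finrank
  have hf := finrank_range_add_finrank_ker f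
  omega

theorem finrank_add_finrank_le_three_mul_of_pencil [Infinite K] [FiniteDimensional K V]
    [FiniteDimensional K W] {f₁ f₂ : V →ₗ[K] W} (hker : ker f₁ ⊓ ker f₂ = ⊥)
    (hrange : range f₁ ⊔ range f₂ = ⊤) {a b : K} (hab : ¬(a = 0 ∧ b = 0))
    (hmax : ∀ c d : K, finrank K (range (c • f₁ + d • f₂)) ≤ finrank K (range (a • f₁ + b • f₂))) :
    finrank K V + finrank K W ≤ 3 * finrank K (range (a • f₁ + b • f₂)) := by
  wlog ha : a ≠ 0 generalizing f₁ f₂ a b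
  · rw [add_comm (a • f₁)]
    refine this (inf_comm (ker f₁) _ ▸ hker) (sup_comm (range f₁) _ ▸ hrange) (by tauto)
      (fun c d => ?_) fun hb => hab ⟨not_not.mp ha, hb⟩
    rw [add_comm, add_comm (b • f₂)]
    exact hmax d c
  set f := a • f₁ + b • f₂
  refine finrank_add_finrank_le_three_mul_of_comap_map_ker_le (g := f₂)
    (comap_map_ker_le_comap_range fun t => ?_) ?_ ?_
  · have hft : f + t • f₂ = a • f₁ + (b + t) • f₂ := by module
    rw [hft]
    exact hmax a (b + t)
  · rw [← hker]
    ext x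
    simp only [mem_inf, mem_ker, f, add_apply, smul_apply]
    exact ⟨fun ⟨hx, hx₂⟩ => ⟨by simpa [hx₂, ha] using hx, hx₂⟩,
      fun ⟨hx₁, hx₂⟩ => ⟨by simp [hx₁, hx₂], hx₂⟩⟩
  · rw [eq_top_iff, ← hrange]
    refine sup_le (fun y ⟨x, hx⟩ => ?_) le_sup_right
    have hy : y = a⁻¹ • (f x - b • f₂ x) := by
      simp [f, ← hx, smul_smul, inv_mul_cancel₀ ha]
    rw [hy]
    exact smul_mem _ _ (sub_mem (mem_sup_left (mem_range_self f x))
      (smul_mem _ _ (mem_sup_right (mem_range_self f₂ x))))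

end LinearMap

end

namespace Matrix

variable {K m n : Type*} [Field K] [Fintype n] [DecidableEq n]

theorem ker_toLin'_inf_ker_toLin'_eq_bot {A B : Matrix m n K}
    (h : (fromRows A B).rank = Fintype.card n) : ker (toLin' A) ⊓ ker (toLin' B) = ⊥ := by
  have hker : ker (toLin' (fromRows A B)) = ⊥ := by
    have := finrank_range_add_finrank_ker (toLin' (fromRows A B))
    have h' : finrank K (range (toLin' (fromRows A B))) = Fintype.card n := h
    rw [finrank_fintype_fun_eq_card] at this
    exact finrank_eq_zero.mp (by omega)
  rw [← hker]
  ext x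
  simp [fromRows_mulVec, ← Sum.elim_zero_zero, Sum.elim_eq_iff]

theorem range_toLin'_sup_range_toLin'_eq_top [Fintype m] {A B : Matrix m n K}
    (h : (fromCols A B).rank = Fintype.card m) : range (toLin' A) ⊔ range (toLin' B) = ⊤ := by
  have hrange : range (toLin' (fromCols A B)) = ⊤ :=
    eq_top_of_finrank_eq (h.trans (finrank_fintype_fun_eq_card K).symm)
  rw [eq_top_iff, ← hrange]
  rintro _ ⟨v, rfl⟩
  rw [toLin'_apply, fromCols_mulVec]
  exact add_mem_sup (mem_range_self _ _) (mem_range_self _ _)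

theorem rank_smul_add_smul (A B : Matrix m n K) (c d : K) :
    (c • A + d • B).rank = finrank K (range (c • toLin' A + d • toLin' B)) := by
  rw [rank, ← toLin'_apply', map_add, map_smul, map_smul]

theorem card_add_card_le_three_mul_rank_of_pencil [Infinite K] [Fintype m]
    {A B : Matrix m n K} (hrows : (fromRows A B).rank = Fintype.card n)
    (hcols : (fromCols A B).rank = Fintype.card m) {a b : K} (hab : ¬(a = 0 ∧ b = 0))
    (hmax : ∀ c d : K, (c • A + d • B).rank ≤ (a • A + b • B).rank) :
    Fintype.card n + Fintype.card m ≤ 3 * (a • A + b • B).rank := by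
  have := LinearMap.finrank_add_finrank_le_three_mul_of_pencil
    (ker_toLin'_inf_ker_toLin'_eq_bot hrows) (range_toLin'_sup_range_toLin'_eq_top hcols) hab
    (fun c d => by simpa only [rank_smul_add_smul] using hmax c d)
  simpa only [rank_smul_add_smul, finrank_fintype_fun_eq_card] using this

end Matrix

section Pencil

variable {N : ℕ} (Γ₁ Γ₂ : Matrix (Fin N) (Fin N) ℂ)

theorem bddAbove_rank_pencil :
    BddAbove {r : ℕ | ∃ α β : ℂ, ¬(α = 0 ∧ β = 0) ∧ (α • Γ₁ + β • Γ₂).rank = r} :=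
  ⟨N, by rintro _ ⟨α, β, -, rfl⟩; simpa using rank_le_card_width (α • Γ₁ + β • Γ₂)⟩

theorem rmax_mem_rank_pencil :
    rmax Γ₁ Γ₂ ∈ {r : ℕ | ∃ α β : ℂ, ¬(α = 0 ∧ β = 0) ∧ (α • Γ₁ + β • Γ₂).rank = r} :=
  Nat.sSup_mem ⟨Γ₁.rank, 1, 0, by simp, by simp⟩ (bddAbove_rank_pencil Γ₁ Γ₂)

theorem rank_le_rmax (α β : ℂ) : (α • Γ₁ + β • Γ₂).rank ≤ rmax Γ₁ Γ₂ := by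
  by_cases hαβ : α = 0 ∧ β = 0
  · simp [hαβ.1, hαβ.2]
  · exact le_csSup (bddAbove_rank_pencil Γ₁ Γ₂) ⟨α, β, hαβ, rfl⟩

end Pencil

theorem rmax_ge_two_thirds_of_true_entangled_general {N : ℕ}
    (Γ₁ Γ₂ : Matrix (Fin N) (Fin N) ℂ) (h : TrueEntangled Γ₁ Γ₂) :
    2 * N ≤ 3 * rmax Γ₁ Γ₂ := by
  obtain ⟨-, hrows, hcols⟩ := h
  obtain ⟨α, β, hαβ, hrank⟩ := rmax_mem_rank_pencil Γ₁ Γ₂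
  have := Matrix.card_add_card_le_three_mul_rank_of_pencil (by simpa using hrows)
    (by simpa using hcols) hαβ fun c d => hrank ▸ rank_le_rmax Γ₁ Γ₂ c d
  simp only [Fintype.card_fin, hrank] at this
  omega

theorem rmax_ge_two_thirds_of_true_entangled {N : ℕ} (hN : 1 ≤ N)
    (Γ₁ Γ₂ : Matrix (Fin N) (Fin N) ℂ) (h : TrueEntangled Γ₁ Γ₂)
    (hn : rmax Γ₁ Γ₂ < N) :
    2 * N ≤ 3 * rmax Γ₁ Γ₂ :=
  rmax_ge_two_thirds_of_true_entangled_general Γ₁ Γ₂ h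
end

section
/- Let N ≥ 1 and let Γ₁, Γ₂ be N×N complex matrices with r_max(Γ₁,Γ₂) = N, and set l = r_min(Γ₁,Γ₂). Then the pair (Γ₁, Γ₂) is SLOCC-equivalent to a pair of the form (I, M), where I is the N×N identity matrix and M is an N×N complex matrix with rank M = l. -/
open Matrix

/-- SLOCC equivalence of two pairs of `N × N` complex matrices. -/
def SLOCCEquiv {N : ℕ} (Γ₁ Γ₂ Γ₁' Γ₂' : Matrix (Fin N) (Fin N) ℂ) : Prop :=
  ∃ (T : Matrix (Fin 2) (Fin 2) ℂ) (P Q : Matrix (Fin N) (Fin N) ℂ),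
    IsUnit T ∧ IsUnit P ∧ IsUnit Q ∧
    Γ₁' = P * (T 0 0 • Γ₁ + T 0 1 • Γ₂) * Q ∧
    Γ₂' = P * (T 1 0 • Γ₁ + T 1 1 • Γ₂) * Q


lemma my_isUnit_of_rank_eq {N : ℕ} (A : Matrix (Fin N) (Fin N) ℂ) (h : A.rank = N) :
    IsUnit A := by
  rw [← Matrix.mulVec_surjective_iff_isUnit]
  have hr : LinearMap.range A.mulVecLin = ⊤ := by
    apply Submodule.eq_top_of_finrank_eq
    rw [← Matrix.rank, h]
    simp
  have := LinearMap.range_eq_top.mp hr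
  intro v
  obtain ⟨w, hw⟩ := this v
  exact ⟨w, by simpa using hw⟩

lemma my_rank_smul {N : ℕ} {c : ℂ} (hc : c ≠ 0) (A : Matrix (Fin N) (Fin N) ℂ) :
    (c • A).rank = A.rank := by
  have h1 : c • A = (c • (1 : Matrix (Fin N) (Fin N) ℂ)) * A := by
    rw [smul_mul_assoc, one_mul]
  rw [h1, rank_mul_eq_right_of_isUnit_det]
  rw [det_smul, det_one, mul_one]
  exact (pow_ne_zero _ hc).isUnit

theorem slocc_normal_form_of_rmax_full {N : ℕ} (hN : 1 ≤ N)
    (Γ₁ Γ₂ : Matrix (Fin N) (Fin N) ℂ) (h : rmax Γ₁ Γ₂ = N) :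
    ∃ M : Matrix (Fin N) (Fin N) ℂ, M.rank = rmin Γ₁ Γ₂ ∧
      SLOCCEquiv Γ₁ Γ₂ (1 : Matrix (Fin N) (Fin N) ℂ) M := by
  set S := {r : ℕ | ∃ α β : ℂ, ¬(α = 0 ∧ β = 0) ∧ (α • Γ₁ + β • Γ₂).rank = r} with hS
  have hSne : S.Nonempty := ⟨Γ₁.rank, 1, 0, by simp, by simp⟩
  have hbdd : ∀ r ∈ S, r ≤ N := by
    rintro r ⟨α, β, -, hr⟩
    exact hr ▸ rank_le_width _
  have hNS : N ∈ S := by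
    have h2 : sSup S = N := h
    exact h2 ▸ Nat.sSup_mem hSne ⟨N, hbdd⟩
  obtain ⟨α, β, hαβ, hA⟩ := hNS
  set A := α • Γ₁ + β • Γ₂ with hAdef
  have hAu : IsUnit A := my_isUnit_of_rank_eq _ hA
  have hAd : IsUnit A.det := (isUnit_iff_isUnit_det _).mp hAu
  have hAinvd : IsUnit A⁻¹.det := A.isUnit_nonsing_inv_det hAd
  have hAinvu : IsUnit A⁻¹ := (isUnit_iff_isUnit_det _).mpr hAinvd
  have hlS : rmin Γ₁ Γ₂ ∈ S := Nat.sInf_mem hSne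
  obtain ⟨γ, δ, hγδ, hB⟩ := hlS
  set B := γ • Γ₁ + δ • Γ₂ with hBdef
  by_cases hd : α * δ - β * γ = 0
  · -- dependent case: rmin = N
    have hBA : ∃ c : ℂ, c ≠ 0 ∧ B = c • A := by
      by_cases hα : α = 0
      · have hβ : β ≠ 0 := fun h' => hαβ ⟨hα, h'⟩
        have hγ : γ = 0 := by
          have : β * γ = 0 := by linear_combination δ * hα - hd
          rcases mul_eq_zero.mp this with h' | h'
          · exact absurd h' hβ
          · exact h'
        have hδ : δ ≠ 0 := fun h' => hγδ ⟨hγ, h'⟩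
        refine ⟨δ / β, div_ne_zero hδ hβ, ?_⟩
        rw [hAdef, hBdef]
        match_scalars
        · field_simp
          linear_combination β * hγ - δ * hα
        · field_simp
      · have hγ : γ ≠ 0 := by
          intro hγ
          have hδ : δ = 0 := by
            have : α * δ = 0 := by linear_combination hd + β * hγ
            rcases mul_eq_zero.mp this with h' | h'
            · exact absurd h' hα
            · exact h'
          exact hγδ ⟨hγ, hδ⟩
        refine ⟨γ / α, div_ne_zero hγ hα, ?_⟩
        rw [hAdef, hBdef]
        match_scalars
        · field_simp
        · field_simp
          linear_combination hd
    obtain ⟨c, hc, hBc⟩ := hBA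
    have hlN : rmin Γ₁ Γ₂ = N := by
      rw [← hB, hBc, my_rank_smul hc, hA]
    -- use T with rows (α, β) and (-conj β, conj α)
    set γ' : ℂ := -(starRingEnd ℂ β)
    set δ' : ℂ := starRingEnd ℂ α
    have hdet : α * δ' - β * γ' ≠ 0 := by
      have : α * δ' - β * γ' = ((Complex.normSq α + Complex.normSq β : ℝ) : ℂ) := by
        simp only [γ', δ', mul_neg, sub_neg_eq_add, Complex.mul_conj, Complex.ofReal_add]
      rw [this]
      rw [Complex.ofReal_ne_zero]
      intro h0
      have h1 : Complex.normSq α = 0 ∧ Complex.normSq β = 0 := by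
        constructor <;> nlinarith [Complex.normSq_nonneg α, Complex.normSq_nonneg β]
      exact hαβ ⟨Complex.normSq_eq_zero.mp h1.1, Complex.normSq_eq_zero.mp h1.2⟩
    have hγδ' : ¬(γ' = 0 ∧ δ' = 0) := by
      rintro ⟨h1, h2⟩
      apply hαβ
      constructor
      · simpa [δ'] using congrArg (starRingEnd ℂ) h2
      · have := congrArg (starRingEnd ℂ) (neg_eq_zero.mp h1)
        simpa [γ'] using this
    set B' := γ' • Γ₁ + δ' • Γ₂ with hB'def
    have hB'S : B'.rank ∈ S := ⟨γ', δ', hγδ', rfl⟩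
    have hB'rank : B'.rank = N := le_antisymm (rank_le_width _)
      (by have h3 : sInf S ≤ B'.rank := Nat.sInf_le hB'S
          have h4 : sInf S = N := hlN
          omega)
    refine ⟨A⁻¹ * B', by rw [rank_mul_eq_right_of_isUnit_det _ _ hAinvd, hB'rank, hlN],
      !![α, β; γ', δ'], A⁻¹, 1, ?_, hAinvu, isUnit_one, ?_, ?_⟩
    · rw [isUnit_iff_isUnit_det, det_fin_two_of]
      exact isUnit_iff_ne_zero.mpr hdet
    · show (1 : Matrix (Fin N) (Fin N) ℂ) = A⁻¹ * (α • Γ₁ + β • Γ₂) * 1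
      rw [mul_one, ← hAdef, nonsing_inv_mul _ hAd]
    · show A⁻¹ * B' = A⁻¹ * (γ' • Γ₁ + δ' • Γ₂) * 1
      rw [mul_one, ← hB'def]
  · -- independent case
    refine ⟨A⁻¹ * B, by rw [rank_mul_eq_right_of_isUnit_det _ _ hAinvd, hB],
      !![α, β; γ, δ], A⁻¹, 1, ?_, hAinvu, isUnit_one, ?_, ?_⟩
    · rw [isUnit_iff_isUnit_det, det_fin_two_of]
      exact isUnit_iff_ne_zero.mpr hd
    · show (1 : Matrix (Fin N) (Fin N) ℂ) = A⁻¹ * (α • Γ₁ + β • Γ₂) * 1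
      rw [mul_one, ← hAdef, nonsing_inv_mul _ hAd]
    · show A⁻¹ * B = A⁻¹ * (γ • Γ₁ + δ • Γ₂) * 1
      rw [mul_one, ← hBdef]
end

section
/- Let (Γ₁, Γ₂) be a pair of 2×2 complex matrices representing a true 2×2×2 entangled state. Then (Γ₁, Γ₂) is SLOCC-equivalent either to the GHZ pair (I₂, [[1,0],[0,0]]) or to the W pair (I₂, [[0,1],[0,0]]), where I₂ is the 2×2 identity matrix. -/
open Matrix

namespace Matrix

variable {K : Type*} [Field K]

theorem isUnit_of_rank_eq_card {n : Type*} [Fintype n] [DecidableEq n] {A : Matrix n n K}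
    (h : A.rank = Fintype.card n) : IsUnit A := by
  rw [← linearIndependent_cols_iff_isUnit, linearIndependent_iff_card_eq_finrank_span,
    Set.finrank, ← rank_eq_finrank_span_cols, h]

theorem rank_lt_card_of_not_isUnit {n : Type*} [Fintype n] [DecidableEq n] {A : Matrix n n K}
    (h : ¬IsUnit A) : A.rank < Fintype.card n :=
  A.rank_le_card_width.lt_of_ne (mt isUnit_of_rank_eq_card h)

theorem exists_eq_vecMulVec_of_rank_le_one {m n : Type*} [Fintype m] [Fintype n]
    [DecidableEq n] {A : Matrix m n K} (h : A.rank ≤ 1) :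
    ∃ u v, A = vecMulVec u v := by
  rw [rank] at h
  obtain ⟨⟨u, _⟩, hu⟩ := finrank_le_one_iff.mp h
  choose c hc using fun j => hu ⟨A *ᵥ Pi.single j 1, Pi.single j 1, rfl⟩
  refine ⟨u, c, ext fun i j => ?_⟩
  have := congrFun (congrArg Subtype.val (hc j)) i
  simp only [SetLike.val_smul, Pi.smul_apply, smul_eq_mul, mulVec_single_one, col_apply] at this
  rw [vecMulVec_apply, ← this, mul_comm]

theorem exists_eq_vecMulVec_of_not_isUnit {A : Matrix (Fin 2) (Fin 2) K} (hA : ¬IsUnit A) :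
    ∃ u v, A = vecMulVec u v :=
  exists_eq_vecMulVec_of_rank_le_one <| Nat.lt_succ_iff.mp <| by
    simpa using rank_lt_card_of_not_isUnit hA

theorem isUnit_add_of_rank_fromRows_fromCols {A B : Matrix (Fin 2) (Fin 2) K}
    (hA : ¬IsUnit A) (hB : ¬IsUnit B)
    (hrows : (fromRows A B).rank = 2) (hcols : (fromCols A B).rank = 2) : IsUnit (A + B) := by
  obtain ⟨u₁, v₁, rfl⟩ := exists_eq_vecMulVec_of_not_isUnit hA
  obtain ⟨u₂, v₂, rfl⟩ := exists_eq_vecMulVec_of_not_isUnit hB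
  set U : Matrix (Fin 2) (Fin 2) K := (of ![u₁, u₂])ᵀ
  set V : Matrix (Fin 2) (Fin 2) K := of ![v₁, v₂]
  set e : Fin 2 → Fin 2 → K := fun k => Pi.single k 1
  have hcols_eq : fromCols (vecMulVec u₁ v₁) (vecMulVec u₂ v₂) =
      U * fromCols (vecMulVec (e 0) v₁) (vecMulVec (e 1) v₂) := by
    simp [U, e, mul_fromCols, mul_vecMulVec]
  have hrows_eq : fromRows (vecMulVec u₁ v₁) (vecMulVec u₂ v₂) =
      fromRows (vecMulVec u₁ (e 0)) (vecMulVec u₂ (e 1)) * V := by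
    simp [V, e, fromRows_mul, vecMulVec_mul]
  have hU : IsUnit U := isUnit_of_rank_eq_card <| U.rank_le_card_width.antisymm <| by
    simpa only [Fintype.card_fin, ← hcols, hcols_eq] using rank_mul_le_left U _
  have hV : IsUnit V := isUnit_of_rank_eq_card <| V.rank_le_card_height.antisymm <| by
    simpa only [Fintype.card_fin, ← hrows, hrows_eq] using rank_mul_le_right _ V
  convert hU.mul hV using 1
  ext i j
  simp [U, V, mul_apply, Fin.sum_univ_two, vecMulVec_apply]

theorem exists_isUnit_smul_add_smul {A B : Matrix (Fin 2) (Fin 2) K}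
    (hrows : (fromRows A B).rank = 2) (hcols : (fromCols A B).rank = 2) :
    ∃ T : Matrix (Fin 2) (Fin 2) K, IsUnit T ∧ IsUnit (T 0 0 • A + T 0 1 • B) := by
  by_cases hA : IsUnit A
  · exact ⟨1, isUnit_one, by simpa using hA⟩
  by_cases hB : IsUnit B
  · exact ⟨!![0, 1; 1, 0], by simp [isUnit_iff_isUnit_det], by simpa using hB⟩
  · exact ⟨!![1, 1; 0, 1], by simp [isUnit_iff_isUnit_det],
      by simpa using isUnit_add_of_rank_fromRows_fromCols hA hB hrows hcols⟩

theorem exists_mulVec_ne_zero {m n : Type*} [Fintype n] {A : Matrix m n K} (hA : A ≠ 0) :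
    ∃ v, A *ᵥ v ≠ 0 := by
  by_contra! h
  exact hA (mulVec_injective (funext fun v => by simp [h]))

theorem mul_self_eq_trace_smul_sub_det_smul (A : Matrix (Fin 2) (Fin 2) K) :
    A * A = A.trace • A - A.det • 1 := by
  have := aeval_self_charpoly A
  rw [charpoly_fin_two] at this
  simp only [map_add, map_sub, map_mul, Polynomial.aeval_X, Polynomial.aeval_C,
    Algebra.algebraMap_eq_smul_one, smul_mul_assoc, one_mul, sq] at this
  rw [← sub_eq_zero, ← this]
  abel

theorem isUnit_transpose_of_linearIndependent {x y : Fin 2 → K}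
    (h : LinearIndependent K ![x, y]) : IsUnit (of ![x, y])ᵀ :=
  (isUnit_transpose _).mpr (linearIndependent_rows_iff_isUnit.mp h)

theorem mul_transpose_of_eq_of_mulVec {A B : Matrix (Fin 2) (Fin 2) K} {x y : Fin 2 → K}
    (hx : A *ᵥ x = B 0 0 • x + B 1 0 • y) (hy : A *ᵥ y = B 0 1 • x + B 1 1 • y) :
    A * (of ![x, y])ᵀ = (of ![x, y])ᵀ * B := by
  ext i j
  fin_cases j
  · simpa [mul_apply, Fin.sum_univ_two, mulVec, dotProduct, mul_comm] using congrFun hx i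
  · simpa [mul_apply, Fin.sum_univ_two, mulVec, dotProduct, mul_comm] using congrFun hy i

theorem exists_mul_eq_mul_of_mul_self_eq_zero {A : Matrix (Fin 2) (Fin 2) K} (hA : A ≠ 0)
    (hAA : A * A = 0) : ∃ S, IsUnit S ∧ A * S = S * !![0, 1; 0, 0] := by
  obtain ⟨v, hv⟩ := exists_mulVec_ne_zero hA
  set x := A *ᵥ v with hx
  have hAx : A *ᵥ x = 0 := by rw [hx, mulVec_mulVec, hAA, zero_mulVec]
  clear_value x
  refine ⟨_, isUnit_transpose_of_linearIndependent (x := x) (y := v) ?_,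
    mul_transpose_of_eq_of_mulVec (by simp [hAx]) (by simp [hx])⟩
  refine LinearIndependent.pair_iff.mpr fun s t hst => ?_
  have ht : t • x = 0 := by
    simpa only [mulVec_add, mulVec_smul, hAx, ← hx, smul_zero, zero_add, mulVec_zero]
      using congrArg (A *ᵥ ·) hst
  obtain rfl : t = 0 := (smul_eq_zero.mp ht).resolve_right hv
  simpa [hv] using hst

theorem exists_mul_eq_mul_of_isIdempotentElem {E : Matrix (Fin 2) (Fin 2) K}
    (hE : IsIdempotentElem E) (hE₀ : E ≠ 0) (hE₁ : E ≠ 1) :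
    ∃ S, IsUnit S ∧ E * S = S * !![1, 0; 0, 0] := by
  obtain ⟨v, hv⟩ := exists_mulVec_ne_zero hE₀
  obtain ⟨w, hw⟩ := exists_mulVec_ne_zero (sub_ne_zero.mpr hE₁)
  set x := E *ᵥ v with hx
  set y := (E - 1) *ᵥ w with hy
  have hEx : E *ᵥ x = x := by rw [hx, mulVec_mulVec, hE.eq]
  have hEy : E *ᵥ y = 0 := by
    rw [hy, mulVec_mulVec, mul_sub, hE.eq, mul_one, sub_self, zero_mulVec]
  clear_value x y
  refine ⟨_, isUnit_transpose_of_linearIndependent (x := x) (y := y) ?_,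
    mul_transpose_of_eq_of_mulVec (by simp [hEx]) (by simp [hEy])⟩
  refine LinearIndependent.pair_iff.mpr fun s t hst => ?_
  have hs : s • x = 0 := by
    simpa only [mulVec_add, mulVec_smul, hEx, hEy, smul_zero, add_zero, mulVec_zero]
      using congrArg (E *ᵥ ·) hst
  obtain rfl : s = 0 := (smul_eq_zero.mp hs).resolve_right hv
  simpa [hw] using hst

theorem exists_affine_similar_projection_or_nilpotent [IsAlgClosed K]
    {M : Matrix (Fin 2) (Fin 2) K} (hM : ∀ μ : K, M ≠ μ • 1) :
    ∃ (c d : K) (S : Matrix (Fin 2) (Fin 2) K), d ≠ 0 ∧ IsUnit S ∧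
      ((c • 1 + d • M) * S = S * !![1, 0; 0, 0] ∨
        (c • 1 + d • M) * S = S * !![0, 1; 0, 0]) := by
  obtain ⟨α, hα⟩ := spectrum.nonempty_of_isAlgClosed_of_finiteDimensional K M
  rw [spectrum.mem_iff, Algebra.algebraMap_eq_smul_one] at hα
  set A := α • 1 - M
  have hA₀ : A ≠ 0 := fun h => hM α (sub_eq_zero.mp h).symm
  have hA_det : A.det = 0 := by
    rwa [isUnit_iff_isUnit_det, isUnit_iff_ne_zero, not_not] at hα
  have hAA : A * A = A.trace • A := by
    rw [mul_self_eq_trace_smul_sub_det_smul, hA_det, zero_smul, sub_zero]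
  by_cases ht : A.trace = 0
  · obtain ⟨S, hS, hAS⟩ :=
      exists_mul_eq_mul_of_mul_self_eq_zero hA₀ (by rw [hAA, ht, zero_smul])
    refine ⟨α, -1, S, by norm_num, hS, .inr ?_⟩
    rwa [neg_one_smul, ← sub_eq_add_neg]
  · set E := A.trace⁻¹ • A
    have hE : IsIdempotentElem E := by
      rw [IsIdempotentElem, smul_mul_smul_comm, hAA, smul_smul, mul_assoc, inv_mul_cancel₀ ht,
        mul_one]
    have hE₀ : E ≠ 0 := smul_ne_zero (inv_ne_zero ht) hA₀
    have hE₁ : E ≠ 1 := by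
      intro h
      apply hα
      have hAE : A = A.trace • E := by rw [smul_smul, mul_inv_cancel₀ ht, one_smul]
      rw [hAE, h, ← Algebra.algebraMap_eq_smul_one]
      exact (Ne.isUnit ht).map _
    obtain ⟨S, hS, hES⟩ := exists_mul_eq_mul_of_isIdempotentElem hE hE₀ hE₁
    refine ⟨A.trace⁻¹ * α, -A.trace⁻¹, S, neg_ne_zero.mpr (inv_ne_zero ht), hS, .inl ?_⟩
    have hE_eq : (A.trace⁻¹ * α) • 1 + -A.trace⁻¹ • M = E := by
      rw [mul_smul, neg_smul, ← smul_neg, ← smul_add, ← sub_eq_add_neg]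
    rwa [hE_eq]

end Matrix

theorem SLOCCEquiv.trans {N : ℕ} {A B C D E F : Matrix (Fin N) (Fin N) ℂ}
    (h₁ : SLOCCEquiv A B C D) (h₂ : SLOCCEquiv C D E F) : SLOCCEquiv A B E F := by
  obtain ⟨T, P, Q, hT, hP, hQ, rfl, rfl⟩ := h₁
  obtain ⟨T', P', Q', hT', hP', hQ', rfl, rfl⟩ := h₂
  refine ⟨T' * T, P' * P, Q * Q', hT'.mul hT, hP'.mul hP, hQ.mul hQ', ?_, ?_⟩ <;>
  · simp only [Matrix.mul_apply, Fin.sum_univ_two, Matrix.mul_add, Matrix.add_mul,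
      mul_smul_comm, smul_mul_assoc, Matrix.mul_assoc]
    module

theorem sloccEquiv_one_of_affine_similar {N : ℕ} {M M' S : Matrix (Fin N) (Fin N) ℂ} {c d : ℂ}
    (hd : d ≠ 0) (hS : IsUnit S) (h : (c • 1 + d • M) * S = S * M') : SLOCCEquiv 1 M 1 M' := by
  have hS' : IsUnit S.det := (isUnit_iff_isUnit_det S).mp hS
  refine ⟨!![1, 0; c, d], S⁻¹, S, ?_, isUnit_nonsing_inv_iff.mpr hS, hS, ?_, ?_⟩
  · simpa [isUnit_iff_isUnit_det] using hd
  · simp [nonsing_inv_mul S hS']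
  · simp [Matrix.mul_assoc, h, nonsing_inv_mul_cancel_left S M' hS']

theorem exists_sloccEquiv_one_of_isUnit {N : ℕ} {Γ₁ Γ₂ : Matrix (Fin N) (Fin N) ℂ}
    (hΓ : LinearIndependent ℂ ![Γ₁, Γ₂]) {T : Matrix (Fin 2) (Fin 2) ℂ} (hT : IsUnit T)
    (hG : IsUnit (T 0 0 • Γ₁ + T 0 1 • Γ₂)) :
    ∃ M, SLOCCEquiv Γ₁ Γ₂ 1 M ∧ ∀ μ : ℂ, M ≠ μ • 1 := by
  set G := T 0 0 • Γ₁ + T 0 1 • Γ₂ with hG_def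
  set H := T 1 0 • Γ₁ + T 1 1 • Γ₂ with hH_def
  have hG' : IsUnit G.det := (isUnit_iff_isUnit_det G).mp hG
  refine ⟨G⁻¹ * H, ⟨T, G⁻¹, 1, hT, isUnit_nonsing_inv_iff.mpr hG, isUnit_one, ?_, ?_⟩,
    fun μ hμ => ?_⟩
  · rw [Matrix.mul_one, nonsing_inv_mul G hG']
  · rw [Matrix.mul_one]
  have hHG : H = μ • G := by
    rw [← mul_nonsing_inv_cancel_left G H hG', hμ, Matrix.mul_smul, Matrix.mul_one]
  have hzero : (T 1 0 - μ * T 0 0) • Γ₁ + (T 1 1 - μ * T 0 1) • Γ₂ = 0 := by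
    rw [← sub_eq_zero.mpr hHG, hH_def, hG_def]
    module
  obtain ⟨h₁, h₂⟩ := LinearIndependent.pair_iff.mp hΓ _ _ hzero
  rw [isUnit_iff_isUnit_det, det_fin_two, isUnit_iff_ne_zero] at hT
  exact hT (by linear_combination T 0 0 * h₂ - T 0 1 * h₁)

theorem ghz_or_w_classification (Γ₁ Γ₂ : Matrix (Fin 2) (Fin 2) ℂ)
    (h : TrueEntangled Γ₁ Γ₂) :
    SLOCCEquiv Γ₁ Γ₂ (1 : Matrix (Fin 2) (Fin 2) ℂ) !![(1 : ℂ), 0; 0, 0] ∨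
    SLOCCEquiv Γ₁ Γ₂ (1 : Matrix (Fin 2) (Fin 2) ℂ) !![(0 : ℂ), 1; 0, 0] := by
  obtain ⟨hΓ, hrows, hcols⟩ := h
  obtain ⟨T, hT, hG⟩ := exists_isUnit_smul_add_smul hrows hcols
  obtain ⟨M, hΓM, hM⟩ := exists_sloccEquiv_one_of_isUnit hΓ hT hG
  obtain ⟨c, d, S, hd, hS, hMS | hMS⟩ := exists_affine_similar_projection_or_nilpotent hM
  · exact .inl (hΓM.trans (sloccEquiv_one_of_affine_similar hd hS hMS))
  · exact .inr (hΓM.trans (sloccEquiv_one_of_affine_similar hd hS hMS))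
end

section
/- The GHZ pair (I₂, [[1,0],[0,0]]) and the W pair (I₂, [[0,1],[0,0]]) of 2×2 complex matrices are not SLOCC-equivalent: there exist no invertible 2×2 complex matrices T, P, Q such that P(T₁₁I₂ + T₁₂·[[1,0],[0,0]])Q = I₂ and P(T₂₁I₂ + T₂₂·[[1,0],[0,0]])Q = [[0,1],[0,0]]. -/
open Matrix

theorem ghz_not_slocc_equiv_w :
    ¬ ∃ (T : Matrix (Fin 2) (Fin 2) ℂ) (P Q : Matrix (Fin 2) (Fin 2) ℂ),
      IsUnit T ∧ IsUnit P ∧ IsUnit Q ∧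
      P * (T 0 0 • (1 : Matrix (Fin 2) (Fin 2) ℂ) +
          T 0 1 • !![(1 : ℂ), 0; 0, 0]) * Q = (1 : Matrix (Fin 2) (Fin 2) ℂ) ∧
      P * (T 1 0 • (1 : Matrix (Fin 2) (Fin 2) ℂ) +
          T 1 1 • !![(1 : ℂ), 0; 0, 0]) * Q = !![(0 : ℂ), 1; 0, 0] := by
  rintro ⟨T, P, Q, -, hP, hQ, h1, h2⟩
  obtain ⟨u, rfl⟩ := hP
  obtain ⟨v, rfl⟩ := hQ
  set a := T 0 0 with ha
  set b := T 0 1 with hb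
  set c := T 1 0 with hc
  set d := T 1 1 with hd
  have hA : a • (1 : Matrix (Fin 2) (Fin 2) ℂ) + b • !![(1:ℂ),0;0,0] = !![a+b, 0; 0, a] := by
    ext i j; fin_cases i <;> fin_cases j <;> simp [Matrix.one_apply]
  have hB : c • (1 : Matrix (Fin 2) (Fin 2) ℂ) + d • !![(1:ℂ),0;0,0] = !![c+d, 0; 0, c] := by
    ext i j; fin_cases i <;> fin_cases j <;> simp [Matrix.one_apply]
  rw [hA] at h1
  rw [hB] at h2
  set A : Matrix (Fin 2) (Fin 2) ℂ := !![a+b, 0; 0, a] with hAdef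
  set B : Matrix (Fin 2) (Fin 2) ℂ := !![c+d, 0; 0, c] with hBdef
  set S : Matrix (Fin 2) (Fin 2) ℂ := (v : Matrix (Fin 2) (Fin 2) ℂ) * (u : Matrix (Fin 2) (Fin 2) ℂ) with hSdef
  have hW2 : (!![(0:ℂ),1;0,0] : Matrix (Fin 2) (Fin 2) ℂ) * !![(0:ℂ),1;0,0] = 0 := by
    norm_num [Matrix.mul_fin_two, ← Matrix.ext_iff, Fin.forall_fin_two]
  have hSA : A * S = 1 := by
    have := congrArg (fun M : Matrix (Fin 2) (Fin 2) ℂ =>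
      (↑u⁻¹ : Matrix (Fin 2) (Fin 2) ℂ) * M * (u : Matrix (Fin 2) (Fin 2) ℂ)) h1
    simpa only [hSdef, mul_assoc, Units.inv_mul_cancel_left, Units.mul_inv_cancel_left,
      Units.inv_mul, Units.mul_inv, one_mul, mul_one] using this
  have key : B * S * B = 0 := by
    have h3 : ((u : Matrix (Fin 2) (Fin 2) ℂ) * B * (v : Matrix (Fin 2) (Fin 2) ℂ)) *
        ((u : Matrix (Fin 2) (Fin 2) ℂ) * B * (v : Matrix (Fin 2) (Fin 2) ℂ)) = 0 := by
      rw [h2, hW2]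
    have := congrArg (fun M : Matrix (Fin 2) (Fin 2) ℂ =>
      (↑u⁻¹ : Matrix (Fin 2) (Fin 2) ℂ) * M * (↑v⁻¹ : Matrix (Fin 2) (Fin 2) ℂ)) h3
    simpa only [hSdef, mul_assoc, Units.inv_mul_cancel_left, Units.mul_inv_cancel_left,
      Units.inv_mul, Units.mul_inv, one_mul, mul_one, mul_zero, zero_mul] using this
  have hcomm : B * A = A * B := by
    simp only [hAdef, hBdef, Matrix.mul_fin_two]
    ring_nf
  have hBB : B * B = 0 := by
    calc B * B = B * (A * S) * B := by rw [hSA, mul_one]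
    _ = A * (B * S * B) := by rw [← mul_assoc B A, hcomm]; simp [mul_assoc]
    _ = 0 := by rw [key, mul_zero]
  have h11 : c = 0 := by
    have := congrFun (congrFun hBB 1) 1
    simp [hBdef, Matrix.mul_fin_two] at this
    simpa [mul_self_eq_zero] using this
  have h00 : c + d = 0 := by
    have := congrFun (congrFun hBB 0) 0
    simp [hBdef, Matrix.mul_fin_two] at this
    simpa [mul_self_eq_zero] using this
  have hd0 : d = 0 := by rw [h11, zero_add] at h00; exact h00
  rw [hBdef, h11, hd0] at h2
  have hzero : (!![(0:ℂ)+0, 0; 0, 0] : Matrix (Fin 2) (Fin 2) ℂ) = 0 := by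
    norm_num [← Matrix.ext_iff, Fin.forall_fin_two]
  rw [hzero, mul_zero, zero_mul] at h2
  have := congrFun (congrFun h2 0) 1
  simp at this
end

section
/- Let Λ = diag(1,1,1,0) be the 4×4 diagonal matrix, let Γ_a be the 4×4 complex matrix with rows (0,0,1,0), (0,0,0,0), (0,0,0,1), (0,1,0,0), and let Γ_b be the 4×4 complex matrix with rows (0,0,0,0), (1,0,0,0), (0,0,0,1), (0,1,0,0). Then the pairs (Λ, Γ_a) and (Λ, Γ_b) are not SLOCC-equivalent; i.e. the permutation of the two 4-dimensional partites sorts these two genuinely entangled 2×4×4 states into different SLOCC classes. -/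
open Matrix

theorem permuted_partites_inequivalent :
    ¬ SLOCCEquiv
      (!![(1 : ℂ), 0, 0, 0; 0, 1, 0, 0; 0, 0, 1, 0; 0, 0, 0, 0])
      (!![(0 : ℂ), 0, 1, 0; 0, 0, 0, 0; 0, 0, 0, 1; 0, 1, 0, 0])
      (!![(1 : ℂ), 0, 0, 0; 0, 1, 0, 0; 0, 0, 1, 0; 0, 0, 0, 0])
      (!![(0 : ℂ), 0, 0, 0; 1, 0, 0, 0; 0, 0, 0, 1; 0, 1, 0, 0]) := by
  rintro ⟨T, P, Q, hT, hP, hQ, h1, h2⟩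
  set La : Matrix (Fin 4) (Fin 4) ℂ :=
    !![(1 : ℂ), 0, 0, 0; 0, 1, 0, 0; 0, 0, 1, 0; 0, 0, 0, 0] with hLa
  set Ga : Matrix (Fin 4) (Fin 4) ℂ :=
    !![(0 : ℂ), 0, 1, 0; 0, 0, 0, 0; 0, 0, 0, 1; 0, 1, 0, 0] with hGa
  set Gb : Matrix (Fin 4) (Fin 4) ℂ :=
    !![(0 : ℂ), 0, 0, 0; 1, 0, 0, 0; 0, 0, 0, 1; 0, 1, 0, 0] with hGb
  set a := T 0 0 with ha
  set b := T 0 1 with hb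
  set c := T 1 0 with hc
  set d := T 1 1 with hd
  have hTd := (Matrix.isUnit_iff_isUnit_det T).mp hT
  have hPd := (Matrix.isUnit_iff_isUnit_det P).mp hP
  have hQd := (Matrix.isUnit_iff_isUnit_det Q).mp hQ
  -- cancellation
  have hPc : ∀ u : Fin 4 → ℂ, P *ᵥ u = 0 → u = 0 := by
    intro u hu
    have : P⁻¹ *ᵥ (P *ᵥ u) = u := by
      rw [Matrix.mulVec_mulVec, Matrix.nonsing_inv_mul P hPd, Matrix.one_mulVec]
    rw [hu, Matrix.mulVec_zero] at this
    exact this.symm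
  have hQc : ∀ u : Fin 4 → ℂ, Q *ᵥ u = 0 → u = 0 := by
    intro u hu
    have : Q⁻¹ *ᵥ (Q *ᵥ u) = u := by
      rw [Matrix.mulVec_mulVec, Matrix.nonsing_inv_mul Q hQd, Matrix.one_mulVec]
    rw [hu, Matrix.mulVec_zero] at this
    exact this.symm
  -- main pencil identity
  have mid : ∀ x y : ℂ, P * ((x * a + y * c) • La + (x * b + y * d) • Ga) * Q
      = x • (P * (a • La + b • Ga) * Q) + y • (P * (c • La + d • Ga) * Q) := by
    intro x y
    simp only [Matrix.mul_add, Matrix.add_mul, Matrix.mul_smul, Matrix.smul_mul, smul_add]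
    module
  have key : ∀ x y : ℂ,
      ((x * a + y * c) • La + (x * b + y * d) • Ga) *ᵥ (Q *ᵥ ![0, 0, y, -x]) = 0 := by
    intro x y
    apply hPc
    have base : (x • La + y • Gb) *ᵥ ![0, 0, y, -x] = 0 := by
      funext i
      fin_cases i <;>
        simp [hLa, hGb, Matrix.mulVec, dotProduct, Fin.sum_univ_four]; ring
    calc P *ᵥ (((x * a + y * c) • La + (x * b + y * d) • Ga) *ᵥ (Q *ᵥ ![0, 0, y, -x]))
        = (P * ((x * a + y * c) • La + (x * b + y * d) • Ga) * Q) *ᵥ ![0, 0, y, -x] := by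
          rw [← Matrix.mulVec_mulVec, ← Matrix.mulVec_mulVec]
      _ = (x • La + y • Gb) *ᵥ ![0, 0, y, -x] := by
          rw [mid x y, ← h1, ← h2, Matrix.add_mulVec, Matrix.smul_mulVec,
            Matrix.smul_mulVec]
      _ = 0 := base
  -- inverse of T
  set S := T⁻¹ with hS
  have hST : S * T = 1 := Matrix.nonsing_inv_mul T hTd
  have e00 : S 0 0 * a + S 0 1 * c = 1 := by
    have := congrFun (congrFun hST 0) 0
    simpa [Matrix.mul_apply, Fin.sum_univ_two, Matrix.one_apply, ha, hc] using this
  have e01 : S 0 0 * b + S 0 1 * d = 0 := by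
    have := congrFun (congrFun hST 0) 1
    simpa [Matrix.mul_apply, Fin.sum_univ_two, Matrix.one_apply, hb, hd] using this
  have e10 : S 1 0 * a + S 1 1 * c = 0 := by
    have := congrFun (congrFun hST 1) 0
    simpa [Matrix.mul_apply, Fin.sum_univ_two, Matrix.one_apply, ha, hc] using this
  have e11 : S 1 0 * b + S 1 1 * d = 1 := by
    have := congrFun (congrFun hST 1) 1
    simpa [Matrix.mul_apply, Fin.sum_univ_two, Matrix.one_apply, hb, hd] using this
  set u1 : Fin 4 → ℂ := Q *ᵥ ![0, 0, S 0 1, -(S 0 0)] with hu1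
  set u0 : Fin 4 → ℂ := Q *ᵥ ![0, 0, S 1 1, -(S 1 0)] with hu0
  have k1 : La *ᵥ u1 = 0 := by
    have := key (S 0 0) (S 0 1)
    rw [e00, e01, one_smul, zero_smul, add_zero, ← hu1] at this
    exact this
  have k0 : Ga *ᵥ u0 = 0 := by
    have := key (S 1 0) (S 1 1)
    rw [e10, e11, zero_smul, one_smul, zero_add, ← hu0] at this
    exact this
  have k2 : (La + Ga) *ᵥ (u1 + u0) = 0 := by
    have := key (S 0 0 + S 1 0) (S 0 1 + S 1 1)
    have c1 : (S 0 0 + S 1 0) * a + (S 0 1 + S 1 1) * c = 1 := by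
      linear_combination e00 + e10
    have c2 : (S 0 0 + S 1 0) * b + (S 0 1 + S 1 1) * d = 1 := by
      linear_combination e01 + e11
    rw [c1, c2, one_smul, one_smul] at this
    have vsum : (![0, 0, S 0 1 + S 1 1, -(S 0 0 + S 1 0)] : Fin 4 → ℂ)
        = ![0, 0, S 0 1, -(S 0 0)] + ![0, 0, S 1 1, -(S 1 0)] := by
      funext i; fin_cases i <;> simp; ring
    rw [vsum, Matrix.mulVec_add, ← hu1, ← hu0] at this
    exact this
  -- extract components
  have c10 : u1 0 = 0 := by
    have := congrFun k1 0
    simpa [hLa, Matrix.mulVec, dotProduct, Fin.sum_univ_four] using this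
  have c11 : u1 1 = 0 := by
    have := congrFun k1 1
    simpa [hLa, Matrix.mulVec, dotProduct, Fin.sum_univ_four] using this
  have c12 : u1 2 = 0 := by
    have := congrFun k1 2
    simpa [hLa, Matrix.mulVec, dotProduct, Fin.sum_univ_four] using this
  have c02 : u0 2 = 0 := by
    have := congrFun k0 0
    simpa [hGa, Matrix.mulVec, dotProduct, Fin.sum_univ_four] using this
  have c03 : u0 3 = 0 := by
    have := congrFun k0 2
    simpa [hGa, Matrix.mulVec, dotProduct, Fin.sum_univ_four] using this
  have c01 : u0 1 = 0 := by
    have := congrFun k0 3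
    simpa [hGa, Matrix.mulVec, dotProduct, Fin.sum_univ_four] using this
  have c00 : u0 0 = 0 := by
    have := congrFun k2 0
    simp [hLa, hGa, Matrix.mulVec, dotProduct, Fin.sum_univ_four,
      Matrix.add_apply, Pi.add_apply] at this
    -- this : combination = 0
    simpa [c10, c12, c02] using this
  have c13 : u1 3 = 0 := by
    have := congrFun k2 2
    simp [hLa, hGa, Matrix.mulVec, dotProduct, Fin.sum_univ_four,
      Matrix.add_apply, Pi.add_apply] at this
    simpa [c12, c02, c03] using this
  have hu1z : u1 = 0 := by
    funext i; fin_cases i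
    · exact c10
    · exact c11
    · exact c12
    · exact c13
  have hu0z : u0 = 0 := by
    funext i; fin_cases i
    · exact c00
    · exact c01
    · exact c02
    · exact c03
  have hv1 : (![0, 0, S 0 1, -(S 0 0)] : Fin 4 → ℂ) = 0 := hQc _ (by rw [← hu1]; exact hu1z)
  have hv0 : (![0, 0, S 1 1, -(S 1 0)] : Fin 4 → ℂ) = 0 := hQc _ (by rw [← hu0]; exact hu0z)
  have hS00 : S 0 0 = 0 := by
    have := congrFun hv1 3
    simpa using this
  have hS01 : S 0 1 = 0 := by
    have := congrFun hv1 2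
    simpa using this
  rw [hS00, hS01] at e00
  simp at e00
end

section
/- Let B be an n×n B-matrix and let Λ'_n = diag(1,...,1,0) be the n×n diagonal matrix with n−1 ones. Then for every λ ∈ ℂ there exist invertible n×n complex matrices P and Q such that P(Λ'_n + λB)Q = Λ'_n and P B Q = B. -/
/-!
Induct along the construction of `B`. Identifying `Fin (n + 1)` with `Fin 1 ⊕ Fin n`, the
bordered matrices are `[[0, r], [0, B]]` and `Λ'_{n+1} = [[1, 0], [0, Λ'_n]]`. Given `P, Q` for
`B`, look for block upper triangular `P' = [[a, s], [0, P]]` and `Q' = [[a⁻¹, v], [0, Q]]`. Since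
`[r; B]` has full column rank, `r Q⁻¹ = a r + s B` for some `a, s`; then `P' B' Q' = B'`, and `a`
is invertible, for otherwise `r = s P⁻¹ B` would lie in the row space of `B`. The corner `v` is
then the unique choice making the top right block of `P' (Λ' + λ B') Q'` vanish. The column case
is the transpose of the row case.
-/

open Matrix

/-- The inductive family of `B` matrices from the appendix: the `1 × 1` zero
matrix is a `B` matrix, and a `B` matrix can be enlarged by bordering it with a
zero column (resp. zero row) and a row `r` (resp. column `c`) that raises the
rank to full. -/
inductive IsBMatrix : {n : ℕ} → Matrix (Fin n) (Fin n) ℂ → Prop where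
  | base : IsBMatrix (0 : Matrix (Fin 1) (Fin 1) ℂ)
  | row {n : ℕ} (B : Matrix (Fin n) (Fin n) ℂ) (r : Matrix (Fin 1) (Fin n) ℂ) :
      IsBMatrix B → B.rank = n - 1 → (Matrix.fromRows r B).rank = n →
      IsBMatrix (Matrix.of fun i j : Fin (n + 1) =>
        if hi : i = 0 then
          (if hj : j = 0 then (0 : ℂ) else r 0 (j.pred hj))
        else
          (if hj : j = 0 then (0 : ℂ) else B (i.pred hi) (j.pred hj)))
  | col {n : ℕ} (B : Matrix (Fin n) (Fin n) ℂ) (c : Matrix (Fin n) (Fin 1) ℂ) :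
      IsBMatrix B → B.rank = n - 1 → (Matrix.fromCols c B).rank = n →
      IsBMatrix (Matrix.of fun i j : Fin (n + 1) =>
        if hi : i = 0 then (0 : ℂ)
        else
          (if hj : j = 0 then c (i.pred hi) 0 else B (i.pred hi) (j.pred hj)))

/-- `Λ'_n`, the `n × n` diagonal matrix with `n - 1` ones followed by one zero. -/
noncomputable def LambdaP (n : ℕ) : Matrix (Fin n) (Fin n) ℂ :=
  Matrix.diagonal (fun i : Fin n => if (i : ℕ) = n - 1 then (0 : ℂ) else 1)

namespace Matrix

theorem exists_mul_eq_of_rank_eq_card {K ι m κ : Type*} [Field K] [Fintype ι] [Fintype m]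
    {M : Matrix ι m K} (h : M.rank = Fintype.card m) (X : Matrix κ m K) :
    ∃ Y : Matrix κ ι K, Y * M = X := by
  have htop : LinearMap.range Mᵀ.mulVecLin = ⊤ := by
    apply Submodule.eq_top_of_finrank_eq
    rw [Module.finrank_fintype_fun_eq_card, ← h, ← rank_transpose]
    rfl
  choose Y hY using fun k => LinearMap.range_eq_top.mp htop (X k)
  refine ⟨of Y, ?_⟩
  ext k j
  simpa [mul_apply, mulVec_transpose, vecMul, dotProduct] using congrFun (hY k) j

theorem rank_fromRows_mul_le {R : Type*} [CommRing R] [StrongRankCondition R]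
    {ι κ m : Type*} [Fintype ι] [Fintype m] [DecidableEq ι]
    (S : Matrix κ ι R) (B : Matrix ι m R) : (fromRows (S * B) B).rank ≤ B.rank := by
  rw [show fromRows (S * B) B = fromRows S 1 * B by rw [fromRows_mul, Matrix.one_mul]]
  exact rank_mul_le_right _ _

def AbsorbsInto {R m : Type*} [CommRing R] [Fintype m] [DecidableEq m]
    (B L : Matrix m m R) (lam : R) : Prop :=
  ∃ P Q : Matrix m m R, IsUnit P ∧ IsUnit Q ∧ P * (L + lam • B) * Q = L ∧ P * B * Q = B

namespace AbsorbsInto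

variable {m : Type*} [Fintype m] [DecidableEq m]

section CommRing

variable {R : Type*} [CommRing R]

theorem zero_left (L : Matrix m m R) (lam : R) : AbsorbsInto 0 L lam :=
  ⟨1, 1, isUnit_one, isUnit_one, by simp, by simp⟩

theorem submatrix {B L : Matrix m m R} {lam : R} (h : AbsorbsInto B L lam)
    {l : Type*} [Fintype l] [DecidableEq l] (e : l ≃ m) :
    AbsorbsInto (B.submatrix e e) (L.submatrix e e) lam := by
  obtain ⟨P, Q, hP, hQ, hL, hB⟩ := h
  refine ⟨P.submatrix e e, Q.submatrix e e, (isUnit_submatrix_equiv e e).2 hP,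
    (isUnit_submatrix_equiv e e).2 hQ, ?_, ?_⟩
  · rw [show L.submatrix e e + lam • B.submatrix e e = (L + lam • B).submatrix e e from rfl,
      submatrix_mul_equiv, submatrix_mul_equiv, hL]
  · rw [submatrix_mul_equiv, submatrix_mul_equiv, hB]

theorem transpose {B L : Matrix m m R} {lam : R} (h : AbsorbsInto B L lam) :
    AbsorbsInto Bᵀ Lᵀ lam := by
  obtain ⟨P, Q, hP, hQ, hL, hB⟩ := h
  refine ⟨Qᵀ, Pᵀ, (isUnit_transpose Q).2 hQ, (isUnit_transpose P).2 hP, ?_, ?_⟩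
  · rw [← transpose_smul, ← transpose_add, ← transpose_mul, ← transpose_mul, ← Matrix.mul_assoc,
      hL]
  · rw [← transpose_mul, ← transpose_mul, ← Matrix.mul_assoc, hB]

end CommRing

section Field

variable {K : Type*} [Field K]

theorem fromBlocks_row {B L : Matrix m m K} {lam : K} (h : AbsorbsInto B L lam)
    {r : Matrix (Fin 1) m K} (hB : B.rank < Fintype.card m)
    (hr : (fromRows r B).rank = Fintype.card m) :
    AbsorbsInto (fromBlocks 0 r 0 B) (fromBlocks 1 0 0 L) lam := by
  obtain ⟨P, Q, hP, hQ, hL, hBPQ⟩ := h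
  rw [isUnit_iff_isUnit_det] at hP hQ
  have hBQ : B * Q = P⁻¹ * B := by
    conv_rhs => rw [← hBPQ]
    rw [← Matrix.mul_assoc, ← Matrix.mul_assoc, nonsing_inv_mul _ hP, Matrix.one_mul]
  obtain ⟨Y, hY⟩ := exists_mul_eq_of_rank_eq_card hr (r * Q⁻¹)
  obtain ⟨a, s, rfl⟩ : ∃ a s, Y = fromCols a s := ⟨_, _, (fromCols_toCols Y).symm⟩
  rw [fromCols_mul_fromRows] at hY
  have ha : IsUnit a.det := by
    by_contra ha
    have ha0 : a = 0 := by
      ext i j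
      simpa [Subsingleton.elim i 0, Subsingleton.elim j 0, det_unique] using ha
    have hr' : r = s * P⁻¹ * B := calc
      r = r * Q⁻¹ * Q := by rw [Matrix.mul_assoc, nonsing_inv_mul _ hQ, Matrix.mul_one]
      _ = s * B * Q := by rw [← hY, ha0, Matrix.zero_mul, zero_add]
      _ = s * P⁻¹ * B := by rw [Matrix.mul_assoc, hBQ, Matrix.mul_assoc]
    have := rank_fromRows_mul_le (s * P⁻¹) B
    rw [← hr', hr] at this
    exact this.not_gt hB
  refine ⟨fromBlocks a s 0 P, fromBlocks a⁻¹ (-(lam • r * Q) - a⁻¹ * s * (L + lam • B) * Q) 0 Q,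
    ?_, ?_, ?_, ?_⟩
  · rw [isUnit_iff_isUnit_det, det_fromBlocks_zero₂₁]
    exact ha.mul hP
  · rw [isUnit_iff_isUnit_det, det_fromBlocks_zero₂₁, det_nonsing_inv]
    exact ha.ringInverse.mul hQ
  · rw [fromBlocks_smul, fromBlocks_add, fromBlocks_multiply, fromBlocks_multiply,
      fromBlocks_inj]
    simp only [Matrix.mul_zero, Matrix.zero_mul, add_zero, zero_add, smul_zero, Matrix.mul_one]
    refine ⟨mul_nonsing_inv _ ha, ?_, trivial, hL⟩
    simp only [Matrix.mul_sub, Matrix.mul_neg, Matrix.add_mul, ← Matrix.mul_assoc,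
      mul_nonsing_inv _ ha, Matrix.one_mul, Matrix.mul_smul, Matrix.smul_mul]
    abel
  · rw [fromBlocks_multiply, fromBlocks_multiply, fromBlocks_inj]
    simp only [Matrix.mul_zero, Matrix.zero_mul, add_zero, zero_add]
    refine ⟨trivial, ?_, trivial, hBPQ⟩
    rw [hY, Matrix.mul_assoc, nonsing_inv_mul _ hQ, Matrix.mul_one]

theorem fromBlocks_col {B L : Matrix m m K} {lam : K} (h : AbsorbsInto B L lam)
    {c : Matrix m (Fin 1) K} (hB : B.rank < Fintype.card m)
    (hc : (fromCols c B).rank = Fintype.card m) :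
    AbsorbsInto (fromBlocks 0 0 c B) (fromBlocks 1 0 0 L) lam := by
  have := (h.transpose.fromBlocks_row (r := cᵀ) (by rwa [rank_transpose])
    (by rwa [← transpose_fromCols, rank_transpose])).transpose
  simpa [fromBlocks_transpose] using this

end Field

end AbsorbsInto

end Matrix

def finSuccEquivFinOneSum (n : ℕ) : Fin (n + 1) ≃ Fin 1 ⊕ Fin n where
  toFun := Fin.cases (Sum.inl 0) Sum.inr
  invFun := Sum.elim (fun _ => 0) Fin.succ
  left_inv i := by cases i using Fin.cases <;> simp
  right_inv x := by rcases x with x | j <;> simp [Fin.fin_one_eq_zero]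

theorem LambdaP_succ {n : ℕ} (hn : 0 < n) :
    LambdaP (n + 1) =
      (fromBlocks 1 0 0 (LambdaP n)).submatrix (finSuccEquivFinOneSum n)
        (finSuccEquivFinOneSum n) := by
  rw [LambdaP, LambdaP, ← diagonal_one, fromBlocks_diagonal, submatrix_diagonal_equiv]
  congr 1
  funext i
  cases i using Fin.cases with
  | zero => simpa [finSuccEquivFinOneSum] using hn.ne
  | succ i => simp [finSuccEquivFinOneSum, show (i : ℕ) + 1 = n ↔ (i : ℕ) = n - 1 by omega]

namespace IsBMatrix

theorem pos {n : ℕ} {B : Matrix (Fin n) (Fin n) ℂ} (h : IsBMatrix B) : 0 < n := by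
  cases h <;> simp

theorem row_eq_submatrix {n : ℕ} (B : Matrix (Fin n) (Fin n) ℂ) (r : Matrix (Fin 1) (Fin n) ℂ) :
    (Matrix.of fun i j : Fin (n + 1) =>
        if hi : i = 0 then
          (if hj : j = 0 then (0 : ℂ) else r 0 (j.pred hj))
        else
          (if hj : j = 0 then (0 : ℂ) else B (i.pred hi) (j.pred hj))) =
      (fromBlocks 0 r 0 B).submatrix (finSuccEquivFinOneSum n) (finSuccEquivFinOneSum n) := by
  ext i j
  cases i using Fin.cases <;> cases j using Fin.cases <;> simp [finSuccEquivFinOneSum]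

theorem col_eq_submatrix {n : ℕ} (B : Matrix (Fin n) (Fin n) ℂ) (c : Matrix (Fin n) (Fin 1) ℂ) :
    (Matrix.of fun i j : Fin (n + 1) =>
        if hi : i = 0 then (0 : ℂ)
        else
          (if hj : j = 0 then c (i.pred hi) 0 else B (i.pred hi) (j.pred hj))) =
      (fromBlocks 0 0 c B).submatrix (finSuccEquivFinOneSum n) (finSuccEquivFinOneSum n) := by
  ext i j
  cases i using Fin.cases <;> cases j using Fin.cases <;> simp [finSuccEquivFinOneSum]

end IsBMatrix

theorem exists_ILO_absorbing_B_into_Lambda {n : ℕ}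
    (B : Matrix (Fin n) (Fin n) ℂ) (hB : IsBMatrix B) (lam : ℂ) :
    ∃ P Q : Matrix (Fin n) (Fin n) ℂ, IsUnit P ∧ IsUnit Q ∧
      P * (LambdaP n + lam • B) * Q = LambdaP n ∧ P * B * Q = B := by
  change AbsorbsInto B (LambdaP n) lam
  induction hB with
  | base => exact AbsorbsInto.zero_left _ lam
  | row B r hB hrank hr ih =>
    rw [IsBMatrix.row_eq_submatrix, LambdaP_succ hB.pos]
    refine (ih.fromBlocks_row ?_ (by rwa [Fintype.card_fin])).submatrix _
    rw [Fintype.card_fin, hrank]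
    exact Nat.sub_lt hB.pos one_pos
  | col B c hB hrank hc ih =>
    rw [IsBMatrix.col_eq_submatrix, LambdaP_succ hB.pos]
    refine (ih.fromBlocks_col ?_ (by rwa [Fintype.card_fin])).submatrix _
    rw [Fintype.card_fin, hrank]
    exact Nat.sub_lt hB.pos one_pos
end

section
/- Let Λ and B be N×N complex matrices. Suppose that for every λ ∈ ℂ there exist invertible N×N complex matrices P, Q with P(Λ + λB)Q = Λ and P B Q = B, and that for every λ ∈ ℂ there exist invertible N×N complex matrices P', Q' with P' Λ Q' = Λ and P'(B + λΛ)Q' = B. Then for every λ ∈ ℂ with λ ≠ 0 there exist invertible N×N complex matrices P_t, Q_t such that P_t Λ Q_t = −λB and P_t B Q_t = (1/λ)Λ; i.e. the pair (Λ, B) can be flipped into (B, Λ) up to nonzero scalar coefficients. -/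
open Matrix

theorem flip_of_Lambda_and_B {N : ℕ} (Λ B : Matrix (Fin N) (Fin N) ℂ)
    (h1 : ∀ lam : ℂ, ∃ P Q : Matrix (Fin N) (Fin N) ℂ, IsUnit P ∧ IsUnit Q ∧
      P * (Λ + lam • B) * Q = Λ ∧ P * B * Q = B)
    (h2 : ∀ lam : ℂ, ∃ P' Q' : Matrix (Fin N) (Fin N) ℂ, IsUnit P' ∧ IsUnit Q' ∧
      P' * Λ * Q' = Λ ∧ P' * (B + lam • Λ) * Q' = B) :
    ∀ lam : ℂ, lam ≠ 0 →
      ∃ Pt Qt : Matrix (Fin N) (Fin N) ℂ, IsUnit Pt ∧ IsUnit Qt ∧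
        Pt * Λ * Qt = (-lam) • B ∧ Pt * B * Qt = lam⁻¹ • Λ := by
  intro lam hlam
  obtain ⟨P1, Q1, hP1, hQ1, h1a, h1b⟩ := h1 lam
  obtain ⟨P2, Q2, hP2, hQ2, h2a, h2b⟩ := h2 (-lam⁻¹)
  obtain ⟨P3, Q3, hP3, hQ3, h3a, h3b⟩ := h1 lam
  have e1 : P1 * Λ * Q1 = Λ - lam • B := by
    have := h1a
    rw [mul_add, add_mul, mul_smul_comm, smul_mul_assoc, h1b] at this
    linear_combination (norm := module) this
  have e2 : P2 * B * Q2 = B + lam⁻¹ • Λ := by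
    have := h2b
    rw [mul_add, add_mul, mul_smul_comm, smul_mul_assoc, h2a] at this
    linear_combination (norm := module) this
  have e3 : P3 * Λ * Q3 = Λ - lam • B := by
    have := h3a
    rw [mul_add, add_mul, mul_smul_comm, smul_mul_assoc, h3b] at this
    linear_combination (norm := module) this
  refine ⟨P3 * (P2 * P1), Q1 * (Q2 * Q3), (hP3.mul (hP2.mul hP1)),
    (hQ1.mul (hQ2.mul hQ3)), ?_, ?_⟩
  · have key : P3 * (P2 * P1) * Λ * (Q1 * (Q2 * Q3))
        = P3 * (P2 * (P1 * Λ * Q1) * Q2) * Q3 := by noncomm_ring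
    rw [key, e1]
    have : P2 * (Λ - lam • B) * Q2 = P2 * Λ * Q2 - lam • (P2 * B * Q2) := by
      rw [mul_sub, sub_mul, mul_smul_comm, smul_mul_assoc]
    rw [this, h2a, e2]
    have : Λ - lam • (B + lam⁻¹ • Λ) = (-lam) • B := by
      rw [smul_add, smul_smul, mul_inv_cancel₀ hlam, one_smul]
      module
    rw [this, mul_smul_comm, smul_mul_assoc, h3b]
  · have key : P3 * (P2 * P1) * B * (Q1 * (Q2 * Q3))
        = P3 * (P2 * (P1 * B * Q1) * Q2) * Q3 := by noncomm_ring
    rw [key, h1b, e2]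
    have : P3 * (B + lam⁻¹ • Λ) * Q3 = P3 * B * Q3 + lam⁻¹ • (P3 * Λ * Q3) := by
      rw [mul_add, add_mul, mul_smul_comm, smul_mul_assoc]
    rw [this, h3b, e3, smul_sub, smul_smul, inv_mul_cancel₀ hlam, one_smul]
    module
end
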